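/- arXiv:1710.09636 — 8 statements merged into one kernel-verified Lean document; each statement's English description precedes it below -/
import Mathlib

section
/- Negativity of the quadratic form of the interaction matrix (Proposition 2). If k_i > 0 for all i, then for every nonzero x ∈ ℝⁿ one has xᵀ Ψ x < 0; in particular, the symmetric part of Ψ is negative definite. -/
open Finset Matrix

lemma offdiag_swap {n : ℕ} (f : Fin n → Fin n → ℝ) :
    ∑ i, ∑ j ∈ Finset.univ.erase i, f i j = ∑ i, ∑ j ∈ Finset.univ.erase i, f j i := by
  have key : ∀ g : Fin n → Fin n → ℝ,
      ∑ i, ∑ j ∈ Finset.univ.erase i, g i j = ∑ i, ∑ j, if i = j then 0 else g i j := by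
    intro g
    refine Finset.sum_congr rfl fun i _ => ?_
    rw [show (∑ j ∈ Finset.univ.erase i, g i j)
        = ∑ j ∈ Finset.univ.erase i, (if i = j then 0 else g i j) from
      Finset.sum_congr rfl fun j hj => by
        rw [if_neg fun h => (Finset.mem_erase.mp hj).1 h.symm]]
    exact Finset.sum_erase _ (by simp)
  rw [key f, key (fun i j => f j i), Finset.sum_comm]
  refine Finset.sum_congr rfl fun i _ => Finset.sum_congr rfl fun j _ => ?_
  by_cases h : i = j
  · simp [h]
  · rw [if_neg fun hh => h hh.symm, if_neg h]

/-- Negativity of the quadratic form of the interaction matrix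
(Proposition 2). If all droop gains are positive, then `xᵀ Ψ x < 0` for every
nonzero `x`; in particular the symmetric part of `Ψ` is negative definite. -/
theorem interaction_matrix_quadratic_form_neg
    (n : ℕ) (hn : 1 ≤ n)
    (B G : Fin n → Fin n → ℝ) (Bsh k : Fin n → ℝ)
    (Δc Δs : Fin n → Fin n → ℝ)
    (hBsymm : ∀ i j, B i j = B j i)
    (hBle : ∀ i j, i ≠ j → B i j ≤ 0)
    (hGsymm : ∀ i j, G i j = G j i)
    (hGge : ∀ i j, i ≠ j → 0 ≤ G i j)
    (hBsh : ∀ i, 0 ≤ Bsh i)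
    (hk : ∀ i, 0 < k i)
    (hΔc_symm : ∀ i j, Δc i j = Δc j i)
    (hΔc_mem : ∀ i j, i ≠ j → Δc i j ∈ Set.Icc (-1 : ℝ) 1)
    (hΔs_skew : ∀ i j, Δs i j = -Δs j i)
    (hΔs_mem : ∀ i j, i ≠ j → Δs i j ∈ Set.Icc (-1 : ℝ) 1)
    (Ψ : Matrix (Fin n) (Fin n) ℝ)
    (hΨdiag : ∀ i, Ψ i i = -((Bsh i + ∑ j ∈ Finset.univ.erase i, |B i j|) + k i))
    (hΨoff : ∀ i j, i ≠ j → Ψ i j = G i j * Δs i j + |B i j| * Δc i j) :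
    ∀ x : Fin n → ℝ, x ≠ 0 → x ⬝ᵥ Ψ.mulVec x < 0 := by
  intro x hx
  -- expand the quadratic form
  have expand : x ⬝ᵥ Ψ.mulVec x
      = (∑ i, x i * (Ψ i i * x i)) + ∑ i, ∑ j ∈ Finset.univ.erase i, x i * (Ψ i j * x j) := by
    rw [← Finset.sum_add_distrib]
    simp only [dotProduct, mulVec, Finset.mul_sum]
    refine Finset.sum_congr rfl fun i _ => ?_
    rw [← Finset.add_sum_erase _ (fun j => x i * (Ψ i j * x j)) (Finset.mem_univ i)]
  -- off-diagonal split
  have offsplit : ∑ i, ∑ j ∈ Finset.univ.erase i, x i * (Ψ i j * x j)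
      = (∑ i, ∑ j ∈ Finset.univ.erase i, G i j * Δs i j * (x i * x j))
        + ∑ i, ∑ j ∈ Finset.univ.erase i, |B i j| * Δc i j * (x i * x j) := by
    rw [← Finset.sum_add_distrib]
    refine Finset.sum_congr rfl fun i _ => ?_
    rw [← Finset.sum_add_distrib]
    refine Finset.sum_congr rfl fun j hj => ?_
    rw [hΨoff i j fun h => (Finset.mem_erase.mp hj).1 h.symm]
    ring
  -- skew part vanishes
  have hSG : ∑ i, ∑ j ∈ Finset.univ.erase i, G i j * Δs i j * (x i * x j) = 0 := by
    have h := offdiag_swap (fun i j => G i j * Δs i j * (x i * x j))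
    have h2 : ∑ i, ∑ j ∈ Finset.univ.erase i, G j i * Δs j i * (x j * x i)
        = -∑ i, ∑ j ∈ Finset.univ.erase i, G i j * Δs i j * (x i * x j) := by
      rw [← Finset.sum_neg_distrib]
      refine Finset.sum_congr rfl fun i _ => ?_
      rw [← Finset.sum_neg_distrib]
      refine Finset.sum_congr rfl fun j _ => ?_
      rw [hGsymm j i, hΔs_skew j i]; ring
    rw [h2] at h
    linarith
  -- |B| part bound
  have hSB : ∑ i, ∑ j ∈ Finset.univ.erase i, |B i j| * Δc i j * (x i * x j)
      ≤ ∑ i, ∑ j ∈ Finset.univ.erase i, |B i j| * x i ^ 2 := by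
    have step1 : ∑ i, ∑ j ∈ Finset.univ.erase i, |B i j| * Δc i j * (x i * x j)
        ≤ ∑ i, ∑ j ∈ Finset.univ.erase i, |B i j| * ((x i ^ 2 + x j ^ 2) / 2) := by
      refine Finset.sum_le_sum fun i _ => Finset.sum_le_sum fun j hj => ?_
      have hij : i ≠ j := fun h => (Finset.mem_erase.mp hj).1 h.symm
      obtain ⟨hc1, hc2⟩ := hΔc_mem i j hij
      have h1 : Δc i j * (x i * x j) ≤ |x i * x j| := by
        calc Δc i j * (x i * x j) ≤ |Δc i j * (x i * x j)| := le_abs_self _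
          _ = |Δc i j| * |x i * x j| := abs_mul _ _
          _ ≤ 1 * |x i * x j| :=
              mul_le_mul_of_nonneg_right (abs_le.mpr ⟨hc1, hc2⟩) (abs_nonneg _)
          _ = |x i * x j| := one_mul _
      have h2 : |x i * x j| ≤ (x i ^ 2 + x j ^ 2) / 2 := by
        rw [abs_mul]
        nlinarith [sq_nonneg (|x i| - |x j|), sq_abs (x i), sq_abs (x j),
          abs_nonneg (x i), abs_nonneg (x j)]
      calc |B i j| * Δc i j * (x i * x j) = |B i j| * (Δc i j * (x i * x j)) := by ring
        _ ≤ |B i j| * ((x i ^ 2 + x j ^ 2) / 2) :=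
            mul_le_mul_of_nonneg_left (h1.trans h2) (abs_nonneg _)
    have step2 : ∑ i, ∑ j ∈ Finset.univ.erase i, |B i j| * ((x i ^ 2 + x j ^ 2) / 2)
        = ∑ i, ∑ j ∈ Finset.univ.erase i, |B i j| * x i ^ 2 := by
      have split : ∑ i, ∑ j ∈ Finset.univ.erase i, |B i j| * ((x i ^ 2 + x j ^ 2) / 2)
          = (∑ i, ∑ j ∈ Finset.univ.erase i, |B i j| * x i ^ 2 / 2)
            + ∑ i, ∑ j ∈ Finset.univ.erase i, |B i j| * x j ^ 2 / 2 := by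
        rw [← Finset.sum_add_distrib]
        refine Finset.sum_congr rfl fun i _ => ?_
        rw [← Finset.sum_add_distrib]
        exact Finset.sum_congr rfl fun j _ => by ring
      have sw : ∑ i, ∑ j ∈ Finset.univ.erase i, |B i j| * x j ^ 2 / 2
          = ∑ i, ∑ j ∈ Finset.univ.erase i, |B i j| * x i ^ 2 / 2 := by
        rw [offdiag_swap (fun i j => |B i j| * x j ^ 2 / 2)]
        refine Finset.sum_congr rfl fun i _ => Finset.sum_congr rfl fun j _ => ?_
        rw [hBsymm j i]
      rw [split, sw, ← Finset.sum_add_distrib]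
      refine Finset.sum_congr rfl fun i _ => ?_
      rw [← Finset.sum_add_distrib]
      exact Finset.sum_congr rfl fun j _ => by ring
    linarith [step1, step2.le, step2.ge]
  -- diagonal part
  have hdiag : ∑ i, x i * (Ψ i i * x i)
      = -(∑ i, Bsh i * x i ^ 2)
        - (∑ i, ∑ j ∈ Finset.univ.erase i, |B i j| * x i ^ 2)
        - ∑ i, k i * x i ^ 2 := by
    have : ∀ i : Fin n, x i * (Ψ i i * x i)
        = -(Bsh i * x i ^ 2) - (∑ j ∈ Finset.univ.erase i, |B i j| * x i ^ 2)
          - k i * x i ^ 2 := by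
      intro i
      rw [hΨdiag i,
        show ∑ j ∈ Finset.univ.erase i, |B i j| * x i ^ 2
          = (∑ j ∈ Finset.univ.erase i, |B i j|) * x i ^ 2 from (Finset.sum_mul ..).symm]
      ring
    calc ∑ i, x i * (Ψ i i * x i)
        = ∑ i, (-(Bsh i * x i ^ 2) - (∑ j ∈ Finset.univ.erase i, |B i j| * x i ^ 2)
            - k i * x i ^ 2) := Finset.sum_congr rfl fun i _ => this i
      _ = -(∑ i, Bsh i * x i ^ 2)
            - (∑ i, ∑ j ∈ Finset.univ.erase i, |B i j| * x i ^ 2)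
            - ∑ i, k i * x i ^ 2 := by
          rw [Finset.sum_sub_distrib, Finset.sum_sub_distrib, Finset.sum_neg_distrib]
  -- positivity of droop term
  have hpos : 0 < ∑ i, k i * x i ^ 2 := by
    obtain ⟨i0, hi0⟩ : ∃ i, x i ≠ 0 := by
      by_contra h
      push_neg at h
      exact hx (funext fun i => h i)
    refine Finset.sum_pos' (fun i _ => mul_nonneg (hk i).le (sq_nonneg _)) ⟨i0, Finset.mem_univ i0, ?_⟩
    exact mul_pos (hk i0) (lt_of_le_of_ne (sq_nonneg _) (Ne.symm (pow_ne_zero 2 hi0)))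
  have hBshpos : 0 ≤ ∑ i, Bsh i * x i ^ 2 :=
    Finset.sum_nonneg fun i _ => mul_nonneg (hBsh i) (sq_nonneg _)
  rw [expand, offsplit, hSG, hdiag]
  linarith
end

section
/- Positivity and asymptotic stability of the frozen system (Proposition 3). Assume k_i > 0 for all i. Then for every continuously differentiable function V : [0,∞) → ℝⁿ satisfying V̇_i(t) = V_i(t) (Ψ V(t))_i for all i and t ≥ 0, with V(0) ∈ ℝⁿ₊: (a) V(t) ∈ ℝⁿ₊ for all t ≥ 0; (b) the function t ↦ Σ_i V_i(t) is nonincreasing; and (c) V(t) → 0 as t → ∞. -/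
/-!
Each coordinate solves a scalar linear equation `V̇ᵢ = gᵢ(t) Vᵢ`, so an integrating factor keeps
it nonnegative. The conductance part of `Ψ` is skew-symmetric and drops out of `V ⬝ᵥ Ψ *ᵥ V`,
and on the nonnegative orthant the diagonal `-(|Bᵢ| + kᵢ)` dominates the susceptance part by
`2 VᵢVⱼ ≤ Vᵢ² + Vⱼ²`. Hence `S = ∑ Vᵢ` satisfies `Ṡ = V ⬝ᵥ Ψ *ᵥ V ≤ -∑ kᵢ Vᵢ² ≤ -c S²`
with `c = (∑ kᵢ⁻¹)⁻¹`, so `S` decreases to `0`, and `0 ≤ Vᵢ ≤ S` gives the rest.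
-/

open Finset Matrix Filter

section OffDiagonalSums

variable {ι : Type*} [Fintype ι] [DecidableEq ι]

lemma sum_sum_erase_comm {M : Type*} [AddCommMonoid M] (f : ι → ι → M) :
    ∑ i, ∑ j ∈ univ.erase i, f i j = ∑ i, ∑ j ∈ univ.erase i, f j i :=
  Finset.sum_comm' fun i j => by simp [ne_comm]

variable {R : Type*} [CommRing R] [LinearOrder R] [IsStrictOrderedRing R]

lemma sum_sum_erase_le_of_add_swap_le {a b : ι → ι → R}
    (h : ∀ i j, i ≠ j → a i j + a j i ≤ b i j + b j i) :
    ∑ i, ∑ j ∈ univ.erase i, a i j ≤ ∑ i, ∑ j ∈ univ.erase i, b i j := by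
  have two_mul_eq (c : ι → ι → R) :
      2 * ∑ i, ∑ j ∈ univ.erase i, c i j = ∑ i, ∑ j ∈ univ.erase i, (c i j + c j i) := by
    rw [two_mul]
    nth_rewrite 2 [sum_sum_erase_comm]
    simp only [← sum_add_distrib]
  have h2 :
      2 * ∑ i, ∑ j ∈ univ.erase i, a i j ≤ 2 * ∑ i, ∑ j ∈ univ.erase i, b i j := by
    rw [two_mul_eq a, two_mul_eq b]
    exact sum_le_sum fun i _ => sum_le_sum fun j hj => h i j (ne_of_mem_erase hj).symm
  exact le_of_mul_le_mul_left h2 two_pos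

lemma dotProduct_mulVec_le_neg_sum_mul_sq {Ψ : Matrix ι ι R} {C : ι → ι → R} {k v : ι → R}
    (hC_symm : ∀ i j, C i j = C j i) (hC_nonneg : ∀ i j, i ≠ j → 0 ≤ C i j)
    (hoff : ∀ i j, i ≠ j → Ψ i j + Ψ j i ≤ 2 * C i j)
    (hdiag : ∀ i, Ψ i i + ∑ j ∈ univ.erase i, C i j ≤ -k i) (hv : ∀ i, 0 ≤ v i) :
    v ⬝ᵥ Ψ *ᵥ v ≤ -∑ i, k i * v i ^ 2 := by
  have hsplit : v ⬝ᵥ Ψ *ᵥ v =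
      ∑ i, Ψ i i * v i ^ 2 + ∑ i, ∑ j ∈ univ.erase i, v i * (Ψ i j * v j) := by
    simp only [dotProduct, mulVec, Finset.mul_sum, ← sum_add_distrib]
    refine sum_congr rfl fun i _ => ?_
    rw [← add_sum_erase _ _ (mem_univ i)]
    ring
  have hoffsum : ∑ i, ∑ j ∈ univ.erase i, v i * (Ψ i j * v j) ≤
      ∑ i, ∑ j ∈ univ.erase i, C i j * v i ^ 2 := by
    refine sum_sum_erase_le_of_add_swap_le fun i j hij => ?_
    calc v i * (Ψ i j * v j) + v j * (Ψ j i * v i) = v i * v j * (Ψ i j + Ψ j i) := by ring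
      _ ≤ v i * v j * (2 * C i j) :=
        mul_le_mul_of_nonneg_left (hoff i j hij) (mul_nonneg (hv i) (hv j))
      _ ≤ C i j * v i ^ 2 + C j i * v j ^ 2 := by
        rw [hC_symm j i]
        nlinarith [two_mul_le_add_sq (v i) (v j), hC_nonneg i j hij]
  calc v ⬝ᵥ Ψ *ᵥ v ≤ ∑ i, (Ψ i i + ∑ j ∈ univ.erase i, C i j) * v i ^ 2 := by
        simp only [hsplit, add_mul, sum_add_distrib, sum_mul]
        gcongr
    _ ≤ ∑ i, -k i * v i ^ 2 :=
        sum_le_sum fun i _ => mul_le_mul_of_nonneg_right (hdiag i) (sq_nonneg _)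
    _ = -∑ i, k i * v i ^ 2 := by simp only [neg_mul, sum_neg_distrib]

end OffDiagonalSums

section ScalarDifferentialInequalities

variable {f f' g : ℝ → ℝ} {a : ℝ}

lemma antitoneOn_Ici_of_hasDerivAt_nonpos (hf : ∀ t ∈ Set.Ici a, HasDerivAt f (f' t) t)
    (hf' : ∀ t ∈ Set.Ici a, f' t ≤ 0) : AntitoneOn f (Set.Ici a) := by
  refine antitoneOn_of_hasDerivWithinAt_nonpos (f' := f') (convex_Ici a)
    (fun t ht => (hf t ht).continuousAt.continuousWithinAt) ?_ ?_ <;> rw [interior_Ici]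
  · exact fun t ht => (hf t (Set.mem_Ici_of_Ioi ht)).hasDerivWithinAt
  · exact fun t ht => hf' t (Set.mem_Ici_of_Ioi ht)

lemma nonneg_of_hasDerivAt_eq_self_mul (hg : ContinuousOn g (Set.Ici a))
    (hf : ∀ t ∈ Set.Ici a, HasDerivAt f (f t * g t) t) (ha : 0 ≤ f a) :
    ∀ t ∈ Set.Ici a, 0 ≤ f t := by
  have hg' : Continuous fun s => g (max s a) :=
    hg.comp_continuous (continuous_id.max continuous_const) fun s => le_max_right s a
  set G : ℝ → ℝ := fun u => ∫ s in a..u, g (max s a)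
  have hconst : ∀ t ∈ Set.Ici a, HasDerivAt (fun u => f u * Real.exp (-G u)) 0 t := by
    intro t ht
    have hG : HasDerivAt G (g t) t := by
      simpa [max_eq_left (Set.mem_Ici.1 ht)] using
        (hg'.integral_hasStrictDerivAt a t).hasDerivAt
    exact ((hf t ht).mul hG.neg.exp).congr_deriv (by simp only [Pi.neg_apply]; ring)
  intro t ht
  have hfa : f t * Real.exp (-G t) = f a * Real.exp (-G a) :=
    constant_of_has_deriv_right_zero
      (fun u hu => (hconst u hu.1).continuousAt.continuousWithinAt)
      (fun u hu => (hconst u hu.1).hasDerivWithinAt) t ⟨ht, le_rfl⟩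
  have : 0 ≤ f t * Real.exp (-G t) := hfa ▸ mul_nonneg ha (Real.exp_pos _).le
  exact nonneg_of_mul_nonneg_left this (Real.exp_pos _)

lemma exists_le_of_hasDerivAt_le_neg {ε c : ℝ} (hc : 0 < c)
    (hf : ∀ t ∈ Set.Ici a, HasDerivAt f (f' t) t) (hf_nonneg : ∀ t ∈ Set.Ici a, 0 ≤ f t)
    (hf' : ∀ t ∈ Set.Ici a, ε < f t → f' t ≤ -c) : ∃ T ∈ Set.Ici a, f T ≤ ε := by
  by_contra! hbig
  have hanti : AntitoneOn (fun t => f t + c * t) (Set.Ici a) :=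
    antitoneOn_Ici_of_hasDerivAt_nonpos
      (fun t ht => (hf t ht).add ((hasDerivAt_id t).const_mul c))
      fun t ht => by linarith [hf' t ht (hbig t ht)]
  have hT : a ≤ a + (f a + 1) / c :=
    le_add_of_nonneg_right (div_nonneg (by linarith [hf_nonneg a Set.self_mem_Ici]) hc.le)
  have hdrop := hanti Set.self_mem_Ici hT hT
  have hcT : c * (a + (f a + 1) / c) = c * a + f a + 1 := by field_simp; ring
  simp only at hdrop
  linarith [hf_nonneg _ hT]

lemma tendsto_zero_of_hasDerivAt_le_neg_mul_sq {c : ℝ} (hc : 0 < c)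
    (hf : ∀ t ∈ Set.Ici a, HasDerivAt f (f' t) t) (hf_nonneg : ∀ t ∈ Set.Ici a, 0 ≤ f t)
    (hf' : ∀ t ∈ Set.Ici a, f' t ≤ -c * f t ^ 2) : Tendsto f atTop (nhds 0) := by
  have hanti := antitoneOn_Ici_of_hasDerivAt_nonpos hf fun t ht =>
    (hf' t ht).trans (by nlinarith [sq_nonneg (f t)])
  refine tendsto_order.2 ⟨fun b hb => eventually_atTop.2 ⟨a, fun t ht => hb.trans_le
    (hf_nonneg t ht)⟩, fun ε hε => ?_⟩
  obtain ⟨T, hT, hfT⟩ := exists_le_of_hasDerivAt_le_neg (ε := ε / 2) (c := c * (ε / 2) ^ 2)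
    (by positivity) hf hf_nonneg fun t ht hlt =>
      (hf' t ht).trans (by rw [neg_mul, neg_le_neg_iff]; gcongr)
  exact eventually_atTop.2 ⟨T, fun t ht =>
    (hanti hT (le_trans hT ht) ht).trans_lt (hfT.trans_lt (half_lt_self hε))⟩

end ScalarDifferentialInequalities

namespace LotkaVolterra

variable {ι : Type*} [Fintype ι] {A : Matrix ι ι ℝ} {V : ℝ → ι → ℝ}
  (hV : ∀ i, ∀ t ∈ Set.Ici (0 : ℝ), HasDerivAt (fun s => V s i) (V t i * (A *ᵥ V t) i) t)
include hV

lemma nonneg (hV0 : ∀ i, 0 ≤ V 0 i) : ∀ t ∈ Set.Ici (0 : ℝ), ∀ i, 0 ≤ V t i := by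
  have hcont : ContinuousOn V (Set.Ici 0) := fun t ht =>
    (continuousAt_pi.2 fun i => (hV i t ht).continuousAt).continuousWithinAt
  have hmulVec : Continuous fun v : ι → ℝ => A *ᵥ v :=
    continuous_const.matrix_mulVec continuous_id
  exact fun t ht i => nonneg_of_hasDerivAt_eq_self_mul
    ((continuous_apply i).comp_continuousOn (hmulVec.comp_continuousOn hcont)) (hV i) (hV0 i) t ht

lemma hasDerivAt_sum {t : ℝ} (ht : t ∈ Set.Ici 0) :
    HasDerivAt (fun s => ∑ i, V s i) (V t ⬝ᵥ A *ᵥ V t) t :=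
  HasDerivAt.fun_sum fun i _ => hV i t ht

lemma sum_antitoneOn (hA : ∀ t ∈ Set.Ici (0 : ℝ), V t ⬝ᵥ A *ᵥ V t ≤ 0) :
    AntitoneOn (fun t => ∑ i, V t i) (Set.Ici 0) :=
  antitoneOn_Ici_of_hasDerivAt_nonpos (fun _ ht => hasDerivAt_sum hV ht) hA

lemma tendsto_zero {k : ι → ℝ} (hk : ∀ i, 0 < k i)
    (hnonneg : ∀ t ∈ Set.Ici (0 : ℝ), ∀ i, 0 ≤ V t i)
    (hA : ∀ t ∈ Set.Ici (0 : ℝ), V t ⬝ᵥ A *ᵥ V t ≤ -∑ i, k i * V t i ^ 2) :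
    Tendsto V atTop (nhds 0) := by
  refine tendsto_pi_nhds.2 fun i => ?_
  have hc : 0 < (∑ j, (k j)⁻¹)⁻¹ := by
    have : Nonempty ι := ⟨i⟩
    exact inv_pos.2 (sum_pos (fun j _ => inv_pos.2 (hk j)) univ_nonempty)
  have hsum : Tendsto (fun t => ∑ j, V t j) atTop (nhds 0) := by
    refine tendsto_zero_of_hasDerivAt_le_neg_mul_sq hc (fun _ ht => hasDerivAt_sum hV ht)
      (fun t ht => sum_nonneg fun j _ => hnonneg t ht j) fun t ht => ?_
    -- Cauchy–Schwarz in Sedrakyan's form: `(∑ v)² / ∑ k⁻¹ ≤ ∑ k v²`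
    have hCS := sq_sum_div_le_sum_sq_div univ (V t) fun j _ => inv_pos.2 (hk j)
    simp only [div_inv_eq_mul] at hCS
    rw [neg_mul, ← div_eq_inv_mul]
    linarith [hA t ht, sum_congr rfl fun j (_ : j ∈ univ) => mul_comm (V t j ^ 2) (k j)]
  exact tendsto_of_tendsto_of_tendsto_of_le_of_le' tendsto_const_nhds hsum
    (eventually_atTop.2 ⟨0, fun t ht => hnonneg t ht i⟩)
    (eventually_atTop.2 ⟨0, fun t ht => single_le_sum (fun j _ => hnonneg t ht j) (mem_univ i)⟩)

end LotkaVolterra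

lemma interactionMatrix_add_swap_le {ι : Type*} {B G Δc Δs : ι → ι → ℝ} {Ψ : Matrix ι ι ℝ}
    (hBsymm : ∀ i j, B i j = B j i) (hGsymm : ∀ i j, G i j = G j i)
    (hΔc_symm : ∀ i j, Δc i j = Δc j i) (hΔs_skew : ∀ i j, Δs i j = -Δs j i)
    (hΨoff : ∀ i j, i ≠ j → Ψ i j = G i j * Δs i j + |B i j| * Δc i j)
    {i j : ι} (hij : i ≠ j) (hΔc : Δc i j ≤ 1) : Ψ i j + Ψ j i ≤ 2 * |B i j| := by
  have hsum : Ψ i j + Ψ j i = 2 * (|B i j| * Δc i j) := by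
    rw [hΨoff i j hij, hΨoff j i hij.symm, hGsymm j i, hBsymm j i, hΔc_symm j i, hΔs_skew i j]
    ring
  rw [hsum]
  nlinarith [abs_nonneg (B i j)]

theorem frozen_system_positive_and_asymptotically_stable_general
    (n : ℕ)
    (B G : Fin n → Fin n → ℝ) (Bsh k : Fin n → ℝ)
    (Δc Δs : Fin n → Fin n → ℝ)
    (hBsymm : ∀ i j, B i j = B j i)
    (hGsymm : ∀ i j, G i j = G j i)
    (hBsh : ∀ i, 0 ≤ Bsh i)
    (hk : ∀ i, 0 < k i)
    (hΔc_symm : ∀ i j, Δc i j = Δc j i)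
    (hΔc_mem : ∀ i j, i ≠ j → Δc i j ∈ Set.Icc (-1 : ℝ) 1)
    (hΔs_skew : ∀ i j, Δs i j = -Δs j i)
    (Ψ : Matrix (Fin n) (Fin n) ℝ)
    (hΨdiag : ∀ i, Ψ i i = -((Bsh i + ∑ j ∈ Finset.univ.erase i, |B i j|) + k i))
    (hΨoff : ∀ i j, i ≠ j → Ψ i j = G i j * Δs i j + |B i j| * Δc i j)
    (V : ℝ → Fin n → ℝ)
    (hODE : ∀ i, ∀ t ∈ Set.Ici (0 : ℝ),
      HasDerivAt (fun s => V s i) (V t i * Ψ.mulVec (V t) i) t)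
    (hV0 : ∀ i, 0 ≤ V 0 i) :
    (∀ t ∈ Set.Ici (0 : ℝ), ∀ i, 0 ≤ V t i) ∧
    (AntitoneOn (fun t => ∑ i, V t i) (Set.Ici 0)) ∧
    (Tendsto V atTop (nhds 0)) := by
  have hnonneg := LotkaVolterra.nonneg hODE hV0
  have hdissipation : ∀ t ∈ Set.Ici (0 : ℝ), V t ⬝ᵥ Ψ *ᵥ V t ≤ -∑ i, k i * V t i ^ 2 :=
    fun t ht => dotProduct_mulVec_le_neg_sum_mul_sq (C := fun i j => |B i j|)
      (fun i j => by rw [hBsymm]) (fun _ _ _ => abs_nonneg _)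
      (fun i j hij => interactionMatrix_add_swap_le hBsymm hGsymm hΔc_symm hΔs_skew hΨoff hij
        (hΔc_mem i j hij).2)
      (fun i => by linarith [hΨdiag i, hBsh i]) (hnonneg t ht)
  refine ⟨hnonneg, LotkaVolterra.sum_antitoneOn hODE fun t ht => (hdissipation t ht).trans ?_,
    LotkaVolterra.tendsto_zero hODE hk hnonneg hdissipation⟩
  exact neg_nonpos.2 (sum_nonneg fun i _ => mul_nonneg (hk i).le (sq_nonneg _))

/-- Positivity and asymptotic stability of the frozen system
(Proposition 3). Solutions of `V̇ = diag(V) Ψ V` starting in the nonnegative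
orthant stay in it, have nonincreasing coordinate sum, and converge to `0`. -/
theorem frozen_system_positive_and_asymptotically_stable
    (n : ℕ) (hn : 1 ≤ n)
    (B G : Fin n → Fin n → ℝ) (Bsh k : Fin n → ℝ)
    (Δc Δs : Fin n → Fin n → ℝ)
    (hBsymm : ∀ i j, B i j = B j i)
    (hBle : ∀ i j, i ≠ j → B i j ≤ 0)
    (hGsymm : ∀ i j, G i j = G j i)
    (hGge : ∀ i j, i ≠ j → 0 ≤ G i j)
    (hBsh : ∀ i, 0 ≤ Bsh i)
    (hk : ∀ i, 0 < k i)
    (hΔc_symm : ∀ i j, Δc i j = Δc j i)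
    (hΔc_mem : ∀ i j, i ≠ j → Δc i j ∈ Set.Icc (-1 : ℝ) 1)
    (hΔs_skew : ∀ i j, Δs i j = -Δs j i)
    (hΔs_mem : ∀ i j, i ≠ j → Δs i j ∈ Set.Icc (-1 : ℝ) 1)
    (Ψ : Matrix (Fin n) (Fin n) ℝ)
    (hΨdiag : ∀ i, Ψ i i = -((Bsh i + ∑ j ∈ Finset.univ.erase i, |B i j|) + k i))
    (hΨoff : ∀ i j, i ≠ j → Ψ i j = G i j * Δs i j + |B i j| * Δc i j)
    (V : ℝ → Fin n → ℝ)
    (hC1 : ∀ i, ContDiffOn ℝ 1 (fun t => V t i) (Set.Ici 0))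
    (hODE : ∀ i, ∀ t ∈ Set.Ici (0 : ℝ),
      HasDerivAt (fun s => V s i) (V t i * Ψ.mulVec (V t) i) t)
    (hV0 : ∀ i, 0 ≤ V 0 i) :
    (∀ t ∈ Set.Ici (0 : ℝ), ∀ i, 0 ≤ V t i) ∧
    (AntitoneOn (fun t => ∑ i, V t i) (Set.Ici 0)) ∧
    (Tendsto V atTop (nhds 0)) :=
  frozen_system_positive_and_asymptotically_stable_general n B G Bsh k Δc Δs hBsymm hGsymm hBsh hk
    hΔc_symm hΔc_mem hΔs_skew Ψ hΨdiag hΨoff V hODE hV0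
end

section
/- Lyapunov decrease along the frozen dynamics (key step in the proof of Proposition 3). Assume k_i > 0 for all i. If V : [0,∞) → ℝⁿ is continuously differentiable, satisfies V̇_i(t) = V_i(t) (Ψ V(t))_i for all i and t ≥ 0, and V(t) ∈ ℝⁿ₊ for all t ≥ 0, then for every t ≥ 0 one has d/dt [ Σ_i V_i(t) ] = V(t)ᵀ Ψ V(t) ≤ 0, with equality only when V(t) = 0. -/
open Finset Matrix

/-!
The quadratic form only sees the symmetric part of `Ψ`: in `Ψ + Ψᵀ` the skew conductance terms
cancel and the off-diagonal entries are bounded by `2 |B i j|`. Bounding each cross term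
`m x y ≤ |m| (x² + y²) / 2` moves the line susceptances onto the diagonal, where
`Ψ i i + ∑_{j ≠ i} |B i j| = -(Bᵢˢʰ + kᵢ) < 0`. Hence `Vᵀ Ψ V ≤ -∑ (Bᵢˢʰ + kᵢ) Vᵢ²`, which is
negative unless `V = 0`; the derivative identity is the ODE summed over `i`.
-/

theorem mul_mul_le_of_abs_le {m c : ℝ} (h : |m| ≤ c) (x y : ℝ) :
    m * (x * y) ≤ c * (x ^ 2 + y ^ 2) / 2 := by
  obtain ⟨hlo, hhi⟩ := abs_le.mp h
  -- `c (x² + y²) / 2 - m x y = ((c + m) (x - y)² + (c - m) (x + y)²) / 4`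
  nlinarith [mul_nonneg (neg_le_iff_add_nonneg.mp hlo) (sq_nonneg (x - y)),
    mul_nonneg (sub_nonneg.mpr hhi) (sq_nonneg (x + y))]

section

variable {ι : Type*} [Fintype ι]

theorem Matrix.dotProduct_add_transpose_mulVec (M : Matrix ι ι ℝ) (v : ι → ℝ) :
    v ⬝ᵥ (M + Mᵀ) *ᵥ v = 2 * (v ⬝ᵥ M *ᵥ v) := by
  rw [add_mulVec, dotProduct_add, dotProduct_mulVec v Mᵀ, vecMul_transpose, dotProduct_comm,
    two_mul]

theorem sum_mul_sq_eq_zero_iff {d : ι → ℝ} (hd : ∀ i, 0 < d i) {v : ι → ℝ} :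
    ∑ i, d i * v i ^ 2 = 0 ↔ v = 0 := by
  rw [sum_eq_zero_iff_of_nonneg fun i _ => mul_nonneg (hd i).le (sq_nonneg _), funext_iff]
  simp [(hd _).ne']

variable [DecidableEq ι]

theorem Finset.sum_sum_erase_mul_of_symm {C : ι → ι → ℝ} (hC : ∀ i j, C i j = C j i)
    (f : ι → ℝ) :
    ∑ i, ∑ j ∈ univ.erase i, C i j * f j = ∑ i, ∑ j ∈ univ.erase i, C i j * f i := by
  rw [Finset.sum_comm' (t' := univ) (s' := fun j => univ.erase j)]
  · exact sum_congr rfl fun i _ => sum_congr rfl fun j _ => by rw [hC]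
  · simp [ne_comm]

theorem Matrix.dotProduct_mulVec_eq_diag_add_offDiag (M : Matrix ι ι ℝ) (v : ι → ℝ) :
    v ⬝ᵥ M *ᵥ v = ∑ i, (M i i * v i ^ 2 + ∑ j ∈ univ.erase i, M i j * (v i * v j)) := by
  simp only [dotProduct, mulVec, mul_sum]
  refine sum_congr rfl fun i _ => ?_
  rw [← add_sum_erase _ _ (mem_univ i)]
  congr 1
  · ring
  · exact sum_congr rfl fun j _ => by ring

theorem Matrix.dotProduct_mulVec_le_of_abs_le {M : Matrix ι ι ℝ} {C : ι → ι → ℝ}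
    (hC : ∀ i j, C i j = C j i) (hM : ∀ i j, i ≠ j → |M i j| ≤ C i j) (v : ι → ℝ) :
    v ⬝ᵥ M *ᵥ v ≤ ∑ i, (M i i + ∑ j ∈ univ.erase i, C i j) * v i ^ 2 := by
  have hswap := sum_sum_erase_mul_of_symm hC (fun j => v j ^ 2)
  calc v ⬝ᵥ M *ᵥ v
      = ∑ i, (M i i * v i ^ 2 + ∑ j ∈ univ.erase i, M i j * (v i * v j)) :=
        dotProduct_mulVec_eq_diag_add_offDiag M v
    _ ≤ ∑ i, (M i i * v i ^ 2 + ∑ j ∈ univ.erase i, C i j * (v i ^ 2 + v j ^ 2) / 2) := by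
        gcongr with i _ j hj
        exact mul_mul_le_of_abs_le (hM i j (ne_of_mem_erase hj).symm) _ _
    _ = ∑ i, (M i i + ∑ j ∈ univ.erase i, C i j) * v i ^ 2 := by
        simp only [mul_add, add_div, sum_add_distrib, hswap, add_mul, sum_mul, ← sum_div]
        ring

theorem dotProduct_interaction_mulVec_le (B G Δc Δs : ι → ι → ℝ) (Ψ : Matrix ι ι ℝ)
    (hBsymm : ∀ i j, B i j = B j i) (hGsymm : ∀ i j, G i j = G j i)
    (hΔc_mem : ∀ i j, i ≠ j → Δc i j ∈ Set.Icc (-1 : ℝ) 1)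
    (hΔs_skew : ∀ i j, Δs i j = -Δs j i)
    (hΨoff : ∀ i j, i ≠ j → Ψ i j = G i j * Δs i j + |B i j| * Δc i j) (v : ι → ℝ) :
    v ⬝ᵥ Ψ *ᵥ v ≤ ∑ i, (Ψ i i + ∑ j ∈ univ.erase i, |B i j|) * v i ^ 2 := by
  have hΔc_abs : ∀ i j, i ≠ j → |Δc i j| ≤ 1 := fun i j hij =>
    abs_le.mpr (hΔc_mem i j hij)
  have hsymm_part : ∀ i j, i ≠ j → |(Ψ + Ψᵀ) i j| ≤ 2 * |B i j| := by
    intro i j hij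
    have hentry : (Ψ + Ψᵀ) i j = |B i j| * (Δc i j + Δc j i) := by
      rw [Matrix.add_apply, transpose_apply, hΨoff i j hij, hΨoff j i hij.symm, hGsymm j i,
        hBsymm j i, hΔs_skew j i]
      ring
    rw [hentry, abs_mul, abs_abs, mul_comm 2]
    gcongr
    linarith [abs_add_le (Δc i j) (Δc j i), hΔc_abs i j hij, hΔc_abs j i hij.symm]
  have h := dotProduct_mulVec_le_of_abs_le (fun i j => by rw [hBsymm]) hsymm_part v
  have hdiag : ∑ i, ((Ψ + Ψᵀ) i i + ∑ j ∈ univ.erase i, 2 * |B i j|) * v i ^ 2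
      = 2 * ∑ i, (Ψ i i + ∑ j ∈ univ.erase i, |B i j|) * v i ^ 2 := by
    rw [mul_sum]
    refine sum_congr rfl fun i _ => ?_
    rw [Matrix.add_apply, transpose_apply, ← mul_sum]
    ring
  rw [dotProduct_add_transpose_mulVec, hdiag] at h
  linarith

end

theorem frozen_system_lyapunov_decrease_general
    (n : ℕ)
    (B G : Fin n → Fin n → ℝ) (Bsh k : Fin n → ℝ)
    (Δc Δs : Fin n → Fin n → ℝ)
    (hBsymm : ∀ i j, B i j = B j i)
    (hGsymm : ∀ i j, G i j = G j i)
    (hBsh : ∀ i, 0 ≤ Bsh i)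
    (hk : ∀ i, 0 < k i)
    (hΔc_mem : ∀ i j, i ≠ j → Δc i j ∈ Set.Icc (-1 : ℝ) 1)
    (hΔs_skew : ∀ i j, Δs i j = -Δs j i)
    (Ψ : Matrix (Fin n) (Fin n) ℝ)
    (hΨdiag : ∀ i, Ψ i i = -((Bsh i + ∑ j ∈ Finset.univ.erase i, |B i j|) + k i))
    (hΨoff : ∀ i j, i ≠ j → Ψ i j = G i j * Δs i j + |B i j| * Δc i j)
    (V : ℝ → Fin n → ℝ)
    (hODE : ∀ i, ∀ t ∈ Set.Ici (0 : ℝ),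
      HasDerivAt (fun s => V s i) (V t i * Ψ.mulVec (V t) i) t) :
    ∀ t ∈ Set.Ici (0 : ℝ),
      HasDerivAt (fun s => ∑ i, V s i) (V t ⬝ᵥ Ψ.mulVec (V t)) t ∧
      V t ⬝ᵥ Ψ.mulVec (V t) ≤ 0 ∧
      (V t ⬝ᵥ Ψ.mulVec (V t) = 0 → V t = 0) := by
  intro t ht
  have hdiss : ∀ i, 0 < Bsh i + k i := fun i => add_pos_of_nonneg_of_pos (hBsh i) (hk i)
  have hbound : V t ⬝ᵥ Ψ *ᵥ V t ≤ -∑ i, (Bsh i + k i) * V t i ^ 2 := by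
    have h := dotProduct_interaction_mulVec_le B G Δc Δs Ψ hBsymm hGsymm hΔc_mem hΔs_skew
      hΨoff (V t)
    have hrow : ∀ i, Ψ i i + ∑ j ∈ univ.erase i, |B i j| = -(Bsh i + k i) := fun i => by
      rw [hΨdiag]
      ring
    simpa only [hrow, neg_mul, sum_neg_distrib] using h
  have hnonneg : 0 ≤ ∑ i, (Bsh i + k i) * V t i ^ 2 :=
    sum_nonneg fun i _ => mul_nonneg (hdiss i).le (sq_nonneg _)
  refine ⟨?_, by linarith, fun hzero => (sum_mul_sq_eq_zero_iff hdiss).mp (by linarith)⟩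
  simpa only [dotProduct] using HasDerivAt.fun_sum fun i _ => hODE i t ht

/-- Lyapunov decrease along the frozen dynamics (key step in the
proof of Proposition 3). Along nonnegative solutions of `V̇ = diag(V) Ψ V` one
has `d/dt Σᵢ Vᵢ = Vᵀ Ψ V ≤ 0`, with equality only at `V = 0`. -/
theorem frozen_system_lyapunov_decrease
    (n : ℕ) (hn : 1 ≤ n)
    (B G : Fin n → Fin n → ℝ) (Bsh k : Fin n → ℝ)
    (Δc Δs : Fin n → Fin n → ℝ)
    (hBsymm : ∀ i j, B i j = B j i)
    (hBle : ∀ i j, i ≠ j → B i j ≤ 0)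
    (hGsymm : ∀ i j, G i j = G j i)
    (hGge : ∀ i j, i ≠ j → 0 ≤ G i j)
    (hBsh : ∀ i, 0 ≤ Bsh i)
    (hk : ∀ i, 0 < k i)
    (hΔc_symm : ∀ i j, Δc i j = Δc j i)
    (hΔc_mem : ∀ i j, i ≠ j → Δc i j ∈ Set.Icc (-1 : ℝ) 1)
    (hΔs_skew : ∀ i j, Δs i j = -Δs j i)
    (hΔs_mem : ∀ i j, i ≠ j → Δs i j ∈ Set.Icc (-1 : ℝ) 1)
    (Ψ : Matrix (Fin n) (Fin n) ℝ)
    (hΨdiag : ∀ i, Ψ i i = -((Bsh i + ∑ j ∈ Finset.univ.erase i, |B i j|) + k i))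
    (hΨoff : ∀ i j, i ≠ j → Ψ i j = G i j * Δs i j + |B i j| * Δc i j)
    (V : ℝ → Fin n → ℝ)
    (hC1 : ∀ i, ContDiffOn ℝ 1 (fun t => V t i) (Set.Ici 0))
    (hODE : ∀ i, ∀ t ∈ Set.Ici (0 : ℝ),
      HasDerivAt (fun s => V s i) (V t i * Ψ.mulVec (V t) i) t)
    (hVnonneg : ∀ t ∈ Set.Ici (0 : ℝ), ∀ i, 0 ≤ V t i) :
    ∀ t ∈ Set.Ici (0 : ℝ),
      HasDerivAt (fun s => ∑ i, V s i) (V t ⬝ᵥ Ψ.mulVec (V t)) t ∧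
      V t ⬝ᵥ Ψ.mulVec (V t) ≤ 0 ∧
      (V t ⬝ᵥ Ψ.mulVec (V t) = 0 → V t = 0) :=
  frozen_system_lyapunov_decrease_general n B G Bsh k Δc Δs hBsymm hGsymm hBsh hk hΔc_mem hΔs_skew Ψ
    hΨdiag hΨoff V hODE
end

section
/- Uniform boundedness and uniform ultimate boundedness of the time-varying network (Proposition 4). Let θ : ℝ → ℝⁿ, k : ℝ → ℝⁿ, V^* : ℝ → ℝⁿ be continuously differentiable with bounded derivatives, and suppose there exist constants c_k > 0, c_r > 0, k_min > 0 such that for all t ∈ ℝ and all i: k_min ≤ k_i(t) ≤ c_k and |k_i(t) V_i^*(t)| ≤ c_r. Consider solutions of the system τ_i V̇_i(t) = V_i(t) [ (Ψ(θ(t)) V(t))_i + k_i(t) V_i^*(t) ] with initial condition V(t₀) ∈ ℝⁿ₊. Then: (a) uniform boundedness: for every R₁ > 0 there exists R₂(R₁) > 0 such that for every t₀ ∈ ℝ and every such solution with ‖V(t₀)‖ ≤ R₁, one has ‖V(t)‖ ≤ R₂(R₁) for all t ≥ t₀; and (b) uniform ultimate boundedness: there exists R > 0 such that for every R₁ > 0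 there exists T(R₁) > 0 such that for every t₀ ∈ ℝ and every such solution with ‖V(t₀)‖ ≤ R₁, one has ‖V(t)‖ ≤ R for all t ≥ t₀ + T(R₁). -/
open Finset Matrix

/-- Euclidean norm on `Fin n → ℝ`. -/
noncomputable def euclNorm {n : ℕ} (x : Fin n → ℝ) : ℝ :=
  Real.sqrt (∑ i, x i ^ 2)

/-- A solution of the time-varying quadratic-droop network
`τᵢ V̇ᵢ = Vᵢ ((Ψ(t) V)ᵢ + kᵢ(t) Vᵢ*(t))` starting in the nonnegative orthant
at time `t₀`. -/
def IsNetSolution {n : ℕ} (τ : Fin n → ℝ) (Ψ : ℝ → Matrix (Fin n) (Fin n) ℝ)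
    (kf Vstf : ℝ → Fin n → ℝ) (t₀ : ℝ) (V : ℝ → Fin n → ℝ) : Prop :=
  (∀ i, 0 ≤ V t₀ i) ∧
  ∀ i, ∀ t ∈ Set.Ici t₀,
    HasDerivAt (fun s => V s i)
      (V t i * ((Ψ t).mulVec (V t) i + kf t i * Vstf t i) / τ i) t

/-!
Along a solution starting in the nonnegative orthant every coordinate obeys `V̇ᵢ = Vᵢ hᵢ(t)` and
therefore stays nonnegative. On the orthant the weighted sum `D = ∑ τᵢ Vᵢ` is a Lyapunov function:
the conductance part of `Ψ` is antisymmetric and the susceptance part is dominated by a weighted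
graph Laplacian, so `Vᵀ Ψ V ≤ -k_min ‖V‖² ≤ -k_min D² / ∑ τᵢ²` (Cauchy–Schwarz), while the
forcing term is at most `c_r ∑ Vᵢ ≤ (c_r / min τ) D`. Hence `Ḋ ≤ -a D² + b D`, so `Ḋ ≤ -M` as
soon as `D ≥ M := (b + 1) / a`. Comparison with constant and linear barriers bounds `D`, and with
it `‖V‖`, uniformly in `t₀`.
-/

section Comparison

open Set

theorem nonneg_of_hasDerivAt_eq_mul {g h : ℝ → ℝ} {a : ℝ}
    (hg : ∀ t ≥ a, HasDerivAt g (g t * h t) t) (hh : ContinuousOn h (Ici a)) (ha : 0 ≤ g a) :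
    ∀ t ≥ a, 0 ≤ g t := by
  -- integrating factor: `g · exp (-∫ h)` is constant, where `h` is extended continuously to `ℝ`
  set h₁ : ℝ → ℝ := fun t => h (max t a)
  have hh₁ : Continuous h₁ :=
    hh.comp_continuous (continuous_id.max continuous_const) fun _ => mem_Ici.mpr (le_max_right _ _)
  set u : ℝ → ℝ := fun t => g t * Real.exp (-∫ s in a..t, h₁ s)
  have hu : ∀ t ≥ a, HasDerivAt u 0 t := by
    intro t ht
    have hexp : HasDerivAt (fun s => Real.exp (-∫ x in a..s, h₁ x))
        (Real.exp (-∫ x in a..t, h₁ x) * -h₁ t) t :=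
      (hh₁.integral_hasStrictDerivAt a t).hasDerivAt.neg.exp
    refine ((hg t ht).mul hexp).congr_deriv ?_
    simp only [h₁, max_eq_left ht]
    ring
  intro t ht
  have hconst : u t = u a :=
    constant_of_has_deriv_right_zero (fun x hx => (hu x hx.1).continuousAt.continuousWithinAt)
      (fun x hx => (hu x hx.1).hasDerivWithinAt) t ⟨ht, le_rfl⟩
  have hut : 0 ≤ u t := by simpa [hconst, u] using ha
  exact nonneg_of_mul_nonneg_left hut (Real.exp_pos _)

variable {f f' : ℝ → ℝ} {a C M δ : ℝ}

theorem le_of_hasDerivAt_of_deriv_neg_of_eq (hf : ∀ t ≥ a, HasDerivAt f (f' t) t)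
    (ha : f a ≤ C) (hC : ∀ t ≥ a, f t = C → f' t < 0) : ∀ t ≥ a, f t ≤ C := fun _ ht =>
  image_le_of_deriv_right_lt_deriv_boundary (B' := fun _ => 0)
    (fun x hx => (hf x hx.1).continuousAt.continuousWithinAt)
    (fun x hx => (hf x hx.1).hasDerivWithinAt) ha (fun x => hasDerivAt_const x C)
    (fun x hx => hC x hx.1) ⟨ht, le_rfl⟩

theorem le_max_of_deriv_le_neg (hf : ∀ t ≥ a, HasDerivAt f (f' t) t) (hδ : 0 < δ)
    (ha : f a ≤ C) (hdec : ∀ t ≥ a, M ≤ f t → f' t ≤ -δ) : ∀ t ≥ a, f t ≤ max C M :=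
  le_of_hasDerivAt_of_deriv_neg_of_eq hf (ha.trans (le_max_left _ _)) fun t ht hft =>
    (hdec t ht (hft ▸ le_max_right _ _)).trans_lt (neg_neg_of_pos hδ)

theorem le_after_of_deriv_le_neg (hf : ∀ t ≥ a, HasDerivAt f (f' t) t) (hδ : 0 < δ)
    (ha : f a ≤ C) (hdec : ∀ t ≥ a, M ≤ f t → f' t ≤ -δ) (hMC : M ≤ C) :
    ∀ t ≥ a + 2 * (C - M) / δ, f t ≤ M := by
  set b := a + 2 * (C - M) / δ
  have hab : a ≤ b := le_add_of_nonneg_right (by positivity)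
  have hb : δ / 2 * (b - a) = C - M := by simp only [b]; field_simp; ring
  -- the slope `-δ / 2` is strictly steeper than any slope `f` can have above the level `M`
  have hline : f b ≤ C - δ / 2 * (b - a) := by
    refine image_le_of_deriv_right_lt_deriv_boundary (B := fun x => C - δ / 2 * (x - a))
      (B' := fun _ => -(δ / 2)) (fun x hx => (hf x hx.1).continuousAt.continuousWithinAt)
      (fun x hx => (hf x hx.1).hasDerivWithinAt) (by simpa using ha)
      (fun x => by simpa using (((hasDerivAt_id x).sub_const a).const_mul (δ / 2)).const_sub C)
      (fun x hx hfx => ?_) ⟨hab, le_rfl⟩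
    have hxb : δ / 2 * (x - a) ≤ δ / 2 * (b - a) := by gcongr; exact hx.2.le
    linarith [hdec x hx.1 (by rw [hfx]; linarith)]
  intro t ht
  simpa using le_max_of_deriv_le_neg (fun s hs => hf s (hab.trans hs)) hδ (by linarith : f b ≤ M)
    (fun s hs => hdec s (hab.trans hs)) t ht

end Comparison

section Lyapunov

variable {E : Type*} {N L : E → ℝ} {L' : ℝ → E → ℝ} {P : ℝ → (ℝ → E) → Prop} {c K M δ : ℝ}

theorem uniformlyUltimatelyBounded_of_lyapunov (hc : 0 < c) (hK : 0 ≤ K) (hM : 0 < M)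
    (hδ : 0 < δ) (hLN : ∀ x, L x ≤ K * N x)
    (hsol : ∀ t₀ V, P t₀ V → ∀ t ≥ t₀, HasDerivAt (fun s => L (V s)) (L' t (V t)) t ∧
      c * N (V t) ≤ L (V t) ∧ (M ≤ L (V t) → L' t (V t) ≤ -δ)) :
    (∀ R₁ > (0 : ℝ), ∃ R₂ > (0 : ℝ), ∀ t₀ V, P t₀ V → N (V t₀) ≤ R₁ →
      ∀ t ≥ t₀, N (V t) ≤ R₂) ∧
    (∃ R > (0 : ℝ), ∀ R₁ > (0 : ℝ), ∃ T > (0 : ℝ), ∀ t₀ V, P t₀ V → N (V t₀) ≤ R₁ →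
      ∀ t ≥ t₀ + T, N (V t) ≤ R) := by
  have hinit : ∀ {R₁ : ℝ} {x : E}, N x ≤ R₁ → L x ≤ K * R₁ := fun h =>
    (hLN _).trans (mul_le_mul_of_nonneg_left h hK)
  refine ⟨fun R₁ hR₁ => ⟨max (K * R₁) M / c, by positivity, fun t₀ V hV h₀ t ht => ?_⟩,
    ⟨M / c, by positivity, fun R₁ hR₁ => ⟨2 * (K * R₁ + 1) / δ, by positivity,
      fun t₀ V hV h₀ t ht => ?_⟩⟩⟩
  · rw [le_div_iff₀' hc]
    exact (hsol t₀ V hV t ht).2.1.trans <| le_max_of_deriv_le_neg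
      (fun s hs => (hsol t₀ V hV s hs).1) hδ (hinit h₀) (fun s hs => (hsol t₀ V hV s hs).2.2) t ht
  · have hKR : 0 ≤ K * R₁ := by positivity
    have hT : t₀ ≤ t := le_trans (le_add_of_nonneg_right (by positivity)) ht
    rw [le_div_iff₀' hc]
    -- the `+ 1` only serves to make `T` positive
    exact (hsol t₀ V hV t hT).2.1.trans <| le_after_of_deriv_le_neg (C := K * R₁ + 1 + M)
      (fun s hs => (hsol t₀ V hV s hs).1) hδ (by linarith [hinit h₀])
      (fun s hs => (hsol t₀ V hV s hs).2.2) (by linarith) t (by rwa [add_sub_cancel_right])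

end Lyapunov

theorem neg_mul_sq_add_mul_le_neg {a b x : ℝ} (ha : 0 < a) (hb : 0 ≤ b) (hx : (b + 1) / a ≤ x) :
    -a * x ^ 2 + b * x ≤ -x := by
  have hax : b + 1 ≤ a * x := by rwa [div_le_iff₀ ha, mul_comm] at hx
  have hx0 : 0 ≤ x := le_trans (by positivity) hx
  nlinarith

section DotProduct

variable {ι : Type*} [Fintype ι]

theorem sq_dotProduct_le_mul (u v : ι → ℝ) : (u ⬝ᵥ v) ^ 2 ≤ (u ⬝ᵥ u) * (v ⬝ᵥ v) := by
  simpa only [dotProduct, sq] using sum_mul_sq_le_sq_mul_sq univ u v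

theorem mul_sum_le_dotProduct {τ v : ι → ℝ} {c : ℝ} (hτ : ∀ i, c ≤ τ i) (hv : 0 ≤ v) :
    c * ∑ i, v i ≤ τ ⬝ᵥ v := by
  rw [mul_sum]
  exact sum_le_sum fun i _ => mul_le_mul_of_nonneg_right (hτ i) (hv i)

theorem dotProduct_le_mul_sum {v r : ι → ℝ} {C : ℝ} (hr : ∀ i, |r i| ≤ C) (hv : 0 ≤ v) :
    v ⬝ᵥ r ≤ C * ∑ i, v i := by
  rw [mul_sum]
  exact sum_le_sum fun i _ => by
    nlinarith [mul_le_mul_of_nonneg_left ((le_abs_self (r i)).trans (hr i)) (hv i)]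

theorem dotProduct_mulVec_self_eq_zero_of_transpose_eq_neg {A : Matrix ι ι ℝ} (hA : Aᵀ = -A)
    (v : ι → ℝ) : v ⬝ᵥ (A *ᵥ v) = 0 := by
  have h := dotProduct_transpose_mulVec A v v
  rw [hA, neg_mulVec, dotProduct_neg] at h
  linarith

theorem dotProduct_mulVec_le_diagonal_sum [DecidableEq ι] {W : Matrix ι ι ℝ} (hW : Wᵀ = W)
    (hW0 : ∀ i j, 0 ≤ W i j) (v : ι → ℝ) :
    v ⬝ᵥ (W *ᵥ v) ≤ v ⬝ᵥ (diagonal (fun i => ∑ j, W i j) *ᵥ v) := by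
  have hsymm : ∑ i, ∑ j, W i j * v j ^ 2 = ∑ i, ∑ j, W i j * v i ^ 2 := by
    rw [sum_comm]
    exact sum_congr rfl fun i _ => sum_congr rfl fun j _ => by rw [← transpose_apply W i j, hW]
  calc v ⬝ᵥ (W *ᵥ v) = ∑ i, ∑ j, W i j * (v i * v j) := by
        simp only [dotProduct, mulVec, mul_sum]
        exact sum_congr rfl fun i _ => sum_congr rfl fun j _ => by ring
    _ ≤ ∑ i, ∑ j, W i j * ((v i ^ 2 + v j ^ 2) / 2) := by
        gcongr with i _ j _
        · exact hW0 i j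
        · nlinarith [sq_nonneg (v i - v j)]
    _ = ∑ i, ∑ j, W i j * v i ^ 2 := by
        simp only [mul_add, mul_div_assoc', sum_add_distrib, ← sum_div, hsymm]
        ring
    _ = v ⬝ᵥ (diagonal (fun i => ∑ j, W i j) *ᵥ v) := by
        simp only [dotProduct, mulVec_diagonal, ← sum_mul]
        exact sum_congr rfl fun i _ => by ring

theorem dotProduct_mulVec_le_of_le {M N : Matrix ι ι ℝ} (hMN : ∀ i j, M i j ≤ N i j)
    {v : ι → ℝ} (hv : 0 ≤ v) : v ⬝ᵥ (M *ᵥ v) ≤ v ⬝ᵥ (N *ᵥ v) := by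
  simp only [dotProduct, mulVec]
  gcongr with i _ j _
  exacts [hv i, hv j, hMN i j]

theorem dotProduct_mulVec_add_le_of_quadForm_le {M : Matrix ι ι ℝ} {τ v r : ι → ℝ} {k C c : ℝ}
    (hM : v ⬝ᵥ (M *ᵥ v) ≤ -k * (v ⬝ᵥ v)) (hk : 0 ≤ k) (hr : ∀ i, |r i| ≤ C) (hC : 0 ≤ C)
    (hc : 0 < c) (hτ : ∀ i, c ≤ τ i) (hττ : 0 < τ ⬝ᵥ τ) (hv : 0 ≤ v) :
    v ⬝ᵥ (M *ᵥ v + r) ≤ -(k / (τ ⬝ᵥ τ)) * (τ ⬝ᵥ v) ^ 2 + C / c * (τ ⬝ᵥ v) := by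
  have hquad : k / (τ ⬝ᵥ τ) * (τ ⬝ᵥ v) ^ 2 ≤ k * (v ⬝ᵥ v) := by
    rw [div_mul_eq_mul_div, div_le_iff₀ hττ, mul_assoc, mul_comm (v ⬝ᵥ v)]
    exact mul_le_mul_of_nonneg_left (sq_dotProduct_le_mul τ v) hk
  have hlin : C * ∑ i, v i ≤ C / c * (τ ⬝ᵥ v) := by
    rw [div_mul_eq_mul_div, le_div_iff₀ hc, mul_right_comm, mul_assoc]
    exact mul_le_mul_of_nonneg_left (mul_sum_le_dotProduct hτ hv) hC
  rw [dotProduct_add]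
  linarith [dotProduct_le_mul_sum hr hv]

end DotProduct

theorem dotProduct_le_euclNorm_mul {n : ℕ} (u v : Fin n → ℝ) :
    u ⬝ᵥ v ≤ euclNorm u * euclNorm v :=
  Real.sum_mul_le_sqrt_mul_sqrt _ _ _

theorem euclNorm_le_sum_of_nonneg {n : ℕ} {v : Fin n → ℝ} (hv : 0 ≤ v) :
    euclNorm v ≤ ∑ i, v i :=
  Real.sqrt_le_iff.mpr ⟨sum_nonneg fun i _ => hv i, sum_sq_le_sq_sum_of_nonneg fun i _ => hv i⟩

section NetworkMatrix

variable {ι : Type*} [Fintype ι] [DecidableEq ι] {B G : ι → ι → ℝ} {Bsh : ι → ℝ}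

theorem networkMatrix_quadForm_le {θ k : ι → ℝ} {kmin : ℝ} {M : Matrix ι ι ℝ}
    (hBsymm : ∀ i j, B i j = B j i) (hGsymm : ∀ i j, G i j = G j i) (hBsh : ∀ i, 0 ≤ Bsh i)
    (hk : ∀ i, kmin ≤ k i)
    (hdiag : ∀ i, M i i = -((Bsh i + ∑ j ∈ univ.erase i, |B i j|) + k i))
    (hoff : ∀ i j, i ≠ j →
      M i j = G i j * Real.sin (θ i - θ j) + |B i j| * Real.cos (θ i - θ j))
    {v : ι → ℝ} (hv : 0 ≤ v) : v ⬝ᵥ (M *ᵥ v) ≤ -kmin * (v ⬝ᵥ v) := by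
  set A : Matrix ι ι ℝ := of fun i j => G i j * Real.sin (θ i - θ j)
  set W : Matrix ι ι ℝ := of fun i j => |B i j|
  have hA : Aᵀ = -A := by
    ext i j
    simp only [A, transpose_apply, of_apply, Matrix.neg_apply, hGsymm j i, ← neg_sub (θ i),
      Real.sin_neg]
    ring
  have hW : Wᵀ = W := by
    ext i j
    simp only [W, transpose_apply, of_apply, hBsymm j i]
  have hMN : ∀ i j, M i j ≤ (A + W - diagonal (fun i => ∑ j, W i j) - kmin • 1) i j := by
    intro i j
    rcases eq_or_ne i j with rfl | hij
    · have hrow : ∑ j, |B i j| = |B i i| + ∑ j ∈ univ.erase i, |B i j| :=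
        (add_sum_erase _ _ (mem_univ i)).symm
      simp only [Matrix.sub_apply, Matrix.add_apply, diagonal_apply_eq, Matrix.smul_apply,
        one_apply_eq, hdiag, A, W, of_apply, sub_self, Real.sin_zero, smul_eq_mul, hrow]
      linarith [hBsh i, hk i]
    · simp only [Matrix.sub_apply, Matrix.add_apply, diagonal_apply_ne _ hij, Matrix.smul_apply,
        one_apply_ne hij, smul_eq_mul, hoff i j hij, A, W, of_apply]
      nlinarith [Real.cos_le_one (θ i - θ j), abs_nonneg (B i j)]
  calc v ⬝ᵥ (M *ᵥ v)
      ≤ v ⬝ᵥ ((A + W - diagonal (fun i => ∑ j, W i j) - kmin • 1) *ᵥ v) :=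
        dotProduct_mulVec_le_of_le hMN hv
    _ = v ⬝ᵥ (A *ᵥ v) + (v ⬝ᵥ (W *ᵥ v) - v ⬝ᵥ (diagonal (fun i => ∑ j, W i j) *ᵥ v))
          - kmin * (v ⬝ᵥ v) := by
        simp only [sub_mulVec, add_mulVec, smul_mulVec, one_mulVec, dotProduct_sub,
          dotProduct_add, dotProduct_smul, smul_eq_mul]
        ring
    _ ≤ 0 + 0 - kmin * (v ⬝ᵥ v) := by
        gcongr
        · exact (dotProduct_mulVec_self_eq_zero_of_transpose_eq_neg hA v).le
        · exact sub_nonpos.mpr (dotProduct_mulVec_le_diagonal_sum hW (fun _ _ => abs_nonneg _) v)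
    _ = -kmin * (v ⬝ᵥ v) := by ring

theorem continuous_networkMatrix_apply {θ kf : ℝ → ι → ℝ} {Ψ : ℝ → Matrix ι ι ℝ}
    (hθ : ∀ i, Continuous fun t => θ t i) (hk : ∀ i, Continuous fun t => kf t i)
    (hΨdiag : ∀ t i, Ψ t i i = -((Bsh i + ∑ j ∈ univ.erase i, |B i j|) + kf t i))
    (hΨoff : ∀ t i j, i ≠ j →
      Ψ t i j = G i j * Real.sin (θ t i - θ t j) + |B i j| * Real.cos (θ t i - θ t j))
    (i j : ι) : Continuous fun t => Ψ t i j := by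
  rcases eq_or_ne i j with rfl | hij
  · simp only [hΨdiag]
    fun_prop
  · simp only [hΨoff _ _ _ hij]
    fun_prop

end NetworkMatrix

section NetSolution

variable {n : ℕ} {τ : Fin n → ℝ} {Ψ : ℝ → Matrix (Fin n) (Fin n) ℝ} {kf Vstf : ℝ → Fin n → ℝ}
  {t₀ : ℝ} {V : ℝ → Fin n → ℝ}

theorem IsNetSolution.nonneg (hV : IsNetSolution τ Ψ kf Vstf t₀ V)
    (hΨ : ∀ i j, Continuous fun t => Ψ t i j) (hr : ∀ i, Continuous fun t => kf t i * Vstf t i) :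
    ∀ t ≥ t₀, 0 ≤ V t := by
  intro t ht i
  have hVcont : ∀ j, ContinuousOn (fun s => V s j) (Set.Ici t₀) := fun j s hs =>
    (hV.2 j s hs).continuousAt.continuousWithinAt
  have hΨV : ContinuousOn (fun s => (Ψ s *ᵥ V s) i) (Set.Ici t₀) := by
    simp only [mulVec, dotProduct]
    fun_prop
  exact nonneg_of_hasDerivAt_eq_mul (h := fun s => ((Ψ s *ᵥ V s) i + kf s i * Vstf s i) / τ i)
    (fun s hs => by simpa only [mul_div_assoc] using hV.2 i s hs)
    ((hΨV.add (hr i).continuousOn).div_const _) (hV.1 i) t ht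

theorem IsNetSolution.hasDerivAt_dotProduct (hV : IsNetSolution τ Ψ kf Vstf t₀ V)
    (hτ : ∀ i, τ i ≠ 0) :
    ∀ t ≥ t₀, HasDerivAt (fun s => τ ⬝ᵥ V s) (V t ⬝ᵥ (Ψ t *ᵥ V t + kf t * Vstf t)) t := by
  intro t ht
  refine (HasDerivAt.fun_sum fun i _ => (hV.2 i t ht).const_mul (τ i)).congr_deriv ?_
  refine sum_congr rfl fun i _ => ?_
  simp only [Pi.add_apply, Pi.mul_apply]
  field_simp [hτ i]

theorem exists_lyapunov_bounds_of_isNetSolution [Nonempty (Fin n)] {B G : Fin n → Fin n → ℝ}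
    {Bsh : Fin n → ℝ} {θ : ℝ → Fin n → ℝ} {kmin cr : ℝ}
    (hBsymm : ∀ i j, B i j = B j i) (hGsymm : ∀ i j, G i j = G j i) (hBsh : ∀ i, 0 ≤ Bsh i)
    (hτ : ∀ i, 0 < τ i) (hθ : ∀ i, Continuous fun t => θ t i)
    (hk : ∀ i, Continuous fun t => kf t i) (hVst : ∀ i, Continuous fun t => Vstf t i)
    (hcr : 0 ≤ cr) (hkmin : 0 < kmin) (hkbound : ∀ t i, kmin ≤ kf t i)
    (hrbound : ∀ t i, |kf t i * Vstf t i| ≤ cr)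
    (hΨdiag : ∀ t i, Ψ t i i = -((Bsh i + ∑ j ∈ univ.erase i, |B i j|) + kf t i))
    (hΨoff : ∀ t i j, i ≠ j →
      Ψ t i j = G i j * Real.sin (θ t i - θ t j) + |B i j| * Real.cos (θ t i - θ t j)) :
    ∃ c > 0, ∃ M > 0, ∀ t₀ V, IsNetSolution τ Ψ kf Vstf t₀ V → ∀ t ≥ t₀,
      c * euclNorm (V t) ≤ τ ⬝ᵥ V t ∧
        (M ≤ τ ⬝ᵥ V t → V t ⬝ᵥ (Ψ t *ᵥ V t + kf t * Vstf t) ≤ -M) := by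
  obtain ⟨i₀, hi₀⟩ := Finite.exists_min τ
  have hττ : 0 < τ ⬝ᵥ τ := sum_pos (fun i _ => mul_pos (hτ i) (hτ i)) univ_nonempty
  set a := kmin / (τ ⬝ᵥ τ)
  set b := cr / τ i₀
  have ha : 0 < a := by positivity
  have hb : 0 ≤ b := div_nonneg hcr (hτ i₀).le
  refine ⟨τ i₀, hτ i₀, (b + 1) / a, by positivity, fun t₀ V hV t ht => ?_⟩
  have hVt : 0 ≤ V t := hV.nonneg (continuous_networkMatrix_apply hθ hk hΨdiag hΨoff)
    (fun i => (hk i).mul (hVst i)) t ht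
  refine ⟨?_, fun hM => ?_⟩
  · calc τ i₀ * euclNorm (V t) ≤ τ i₀ * ∑ i, V t i :=
          mul_le_mul_of_nonneg_left (euclNorm_le_sum_of_nonneg hVt) (hτ i₀).le
      _ ≤ τ ⬝ᵥ V t := mul_sum_le_dotProduct hi₀ hVt
  · calc V t ⬝ᵥ (Ψ t *ᵥ V t + kf t * Vstf t) ≤ -a * (τ ⬝ᵥ V t) ^ 2 + b * (τ ⬝ᵥ V t) :=
          dotProduct_mulVec_add_le_of_quadForm_le
            (networkMatrix_quadForm_le hBsymm hGsymm hBsh (hkbound t) (hΨdiag t) (hΨoff t) hVt)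
            hkmin.le (hrbound t) hcr (hτ i₀) hi₀ hττ hVt
      _ ≤ -(τ ⬝ᵥ V t) := neg_mul_sq_add_mul_le_neg ha hb hM
      _ ≤ -((b + 1) / a) := neg_le_neg hM

end NetSolution

theorem time_varying_network_uniformly_ultimately_bounded_general
    (n : ℕ) (hn : 1 ≤ n)
    (B G : Fin n → Fin n → ℝ) (Bsh τ : Fin n → ℝ)
    (hBsymm : ∀ i j, B i j = B j i)
    (hGsymm : ∀ i j, G i j = G j i)
    (hBsh : ∀ i, 0 ≤ Bsh i)
    (hτ : ∀ i, 0 < τ i)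
    (θ kf Vstf : ℝ → Fin n → ℝ)
    (hθC1 : ∀ i, ContDiff ℝ 1 (fun t => θ t i))
    (hkC1 : ∀ i, ContDiff ℝ 1 (fun t => kf t i))
    (hVstC1 : ∀ i, ContDiff ℝ 1 (fun t => Vstf t i))
    (ck cr kmin : ℝ) (hcr : 0 < cr) (hkmin : 0 < kmin)
    (hkbound : ∀ t i, kmin ≤ kf t i ∧ kf t i ≤ ck)
    (hrbound : ∀ t i, |kf t i * Vstf t i| ≤ cr)
    (Ψ : ℝ → Matrix (Fin n) (Fin n) ℝ)
    (hΨdiag : ∀ t i,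
      Ψ t i i = -((Bsh i + ∑ j ∈ Finset.univ.erase i, |B i j|) + kf t i))
    (hΨoff : ∀ t i j, i ≠ j →
      Ψ t i j = G i j * Real.sin (θ t i - θ t j)
                + |B i j| * Real.cos (θ t i - θ t j)) :
    -- (a) uniform boundedness
    (∀ R₁ > (0 : ℝ), ∃ R₂ > (0 : ℝ), ∀ (t₀ : ℝ) (V : ℝ → Fin n → ℝ),
      IsNetSolution τ Ψ kf Vstf t₀ V → euclNorm (V t₀) ≤ R₁ →
        ∀ t ≥ t₀, euclNorm (V t) ≤ R₂) ∧
    -- (b) uniform ultimate boundedness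
    (∃ R > (0 : ℝ), ∀ R₁ > (0 : ℝ), ∃ T > (0 : ℝ),
      ∀ (t₀ : ℝ) (V : ℝ → Fin n → ℝ),
        IsNetSolution τ Ψ kf Vstf t₀ V → euclNorm (V t₀) ≤ R₁ →
          ∀ t ≥ t₀ + T, euclNorm (V t) ≤ R) := by
  have : Nonempty (Fin n) := ⟨⟨0, hn⟩⟩
  obtain ⟨c, hc, M, hM, hsol⟩ := exists_lyapunov_bounds_of_isNetSolution hBsymm hGsymm hBsh hτ
    (fun i => (hθC1 i).continuous) (fun i => (hkC1 i).continuous)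
    (fun i => (hVstC1 i).continuous) hcr.le hkmin (fun t i => (hkbound t i).1) hrbound hΨdiag hΨoff
  exact uniformlyUltimatelyBounded_of_lyapunov (L := (τ ⬝ᵥ ·))
    (L' := fun t v => v ⬝ᵥ (Ψ t *ᵥ v + kf t * Vstf t)) hc (Real.sqrt_nonneg _) hM hM
    (dotProduct_le_euclNorm_mul τ) fun t₀ V hV t ht =>
      ⟨hV.hasDerivAt_dotProduct (fun i => (hτ i).ne') t ht, hsol t₀ V hV t ht⟩

/-- Uniform boundedness and uniform ultimate boundedness of the
time-varying network (Proposition 4). -/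
theorem time_varying_network_uniformly_ultimately_bounded
    (n : ℕ) (hn : 1 ≤ n)
    (B G : Fin n → Fin n → ℝ) (Bsh τ : Fin n → ℝ)
    (hBsymm : ∀ i j, B i j = B j i)
    (hBle : ∀ i j, i ≠ j → B i j ≤ 0)
    (hGsymm : ∀ i j, G i j = G j i)
    (hGge : ∀ i j, i ≠ j → 0 ≤ G i j)
    (hBsh : ∀ i, 0 ≤ Bsh i)
    (hτ : ∀ i, 0 < τ i)
    (θ kf Vstf : ℝ → Fin n → ℝ)
    (hθC1 : ∀ i, ContDiff ℝ 1 (fun t => θ t i))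
    (hkC1 : ∀ i, ContDiff ℝ 1 (fun t => kf t i))
    (hVstC1 : ∀ i, ContDiff ℝ 1 (fun t => Vstf t i))
    (hθder : ∃ Mθ : ℝ, ∀ i t, |deriv (fun s => θ s i) t| ≤ Mθ)
    (hkder : ∃ Mk : ℝ, ∀ i t, |deriv (fun s => kf s i) t| ≤ Mk)
    (hVstder : ∃ Mv : ℝ, ∀ i t, |deriv (fun s => Vstf s i) t| ≤ Mv)
    (ck cr kmin : ℝ) (hck : 0 < ck) (hcr : 0 < cr) (hkmin : 0 < kmin)
    (hkbound : ∀ t i, kmin ≤ kf t i ∧ kf t i ≤ ck)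
    (hrbound : ∀ t i, |kf t i * Vstf t i| ≤ cr)
    (Ψ : ℝ → Matrix (Fin n) (Fin n) ℝ)
    (hΨdiag : ∀ t i,
      Ψ t i i = -((Bsh i + ∑ j ∈ Finset.univ.erase i, |B i j|) + kf t i))
    (hΨoff : ∀ t i j, i ≠ j →
      Ψ t i j = G i j * Real.sin (θ t i - θ t j)
                + |B i j| * Real.cos (θ t i - θ t j)) :
    -- (a) uniform boundedness
    (∀ R₁ > (0 : ℝ), ∃ R₂ > (0 : ℝ), ∀ (t₀ : ℝ) (V : ℝ → Fin n → ℝ),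
      IsNetSolution τ Ψ kf Vstf t₀ V → euclNorm (V t₀) ≤ R₁ →
        ∀ t ≥ t₀, euclNorm (V t) ≤ R₂) ∧
    -- (b) uniform ultimate boundedness
    (∃ R > (0 : ℝ), ∀ R₁ > (0 : ℝ), ∃ T > (0 : ℝ),
      ∀ (t₀ : ℝ) (V : ℝ → Fin n → ℝ),
        IsNetSolution τ Ψ kf Vstf t₀ V → euclNorm (V t₀) ≤ R₁ →
          ∀ t ≥ t₀ + T, euclNorm (V t) ≤ R) :=
  time_varying_network_uniformly_ultimately_bounded_general n hn B G Bsh τ hBsymm hGsymm hBsh hτ θ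
    kf Vstf hθC1 hkC1 hVstC1 ck cr kmin hcr hkmin hkbound hrbound Ψ hΨdiag hΨoff
end

section
/- Cooperativity condition (Proposition 5). Let θ ∈ ℝⁿ be a vector of angles and suppose that for every pair i ≠ j with (G_{i,j}, B_{i,j}) ≠ (0,0) one has B_{i,j} < 0, θ_i − θ_j ∈ (−π/2, π/2), and G_{i,j} |sin(θ_i − θ_j)| ≤ |B_{i,j}| cos(θ_i − θ_j) (i.e., |G_{i,j}/B_{i,j}| ≤ |cot(θ_i − θ_j)|). Then the interaction matrix Ψ(θ) is Metzler, i.e., Ψ(θ)_{i,j} ≥ 0 for all i ≠ j. -/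
open Finset Matrix

/-- Cooperativity condition (Proposition 5). Under the angle and
`G/B`-ratio conditions, the interaction matrix `Ψ(θ)` is Metzler. -/
theorem interaction_matrix_metzler
    (n : ℕ) (hn : 1 ≤ n)
    (B G : Fin n → Fin n → ℝ) (Bsh k : Fin n → ℝ)
    (hBsymm : ∀ i j, B i j = B j i)
    (hBle : ∀ i j, i ≠ j → B i j ≤ 0)
    (hGsymm : ∀ i j, G i j = G j i)
    (hGge : ∀ i j, i ≠ j → 0 ≤ G i j)
    (hBsh : ∀ i, 0 ≤ Bsh i)
    (hk : ∀ i, 0 < k i)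
    (θ : Fin n → ℝ)
    (hcond : ∀ i j, i ≠ j → (G i j, B i j) ≠ (0, 0) →
      B i j < 0 ∧
      θ i - θ j ∈ Set.Ioo (-(Real.pi / 2)) (Real.pi / 2) ∧
      G i j * |Real.sin (θ i - θ j)| ≤ |B i j| * Real.cos (θ i - θ j))
    (Ψ : Matrix (Fin n) (Fin n) ℝ)
    (hΨdiag : ∀ i,
      Ψ i i = -((Bsh i + ∑ j ∈ Finset.univ.erase i, |B i j|) + k i))
    (hΨoff : ∀ i j, i ≠ j →
      Ψ i j = G i j * Real.sin (θ i - θ j) + |B i j| * Real.cos (θ i - θ j)) :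
    ∀ i j, i ≠ j → 0 ≤ Ψ i j := by
  intro i j hij
  rw [hΨoff i j hij]
  by_cases h0 : (G i j, B i j) = (0, 0)
  · have hG : G i j = 0 := (Prod.mk.injEq _ _ _ _ ▸ h0).1
    have hB : B i j = 0 := (Prod.mk.injEq _ _ _ _ ▸ h0).2
    simp [hG, hB]
  · obtain ⟨hBneg, hθ, hratio⟩ := hcond i j hij h0
    have h1 : -(G i j * |Real.sin (θ i - θ j)|) ≤ G i j * Real.sin (θ i - θ j) := by
      rw [neg_le]
      calc -(G i j * Real.sin (θ i - θ j)) = G i j * (-Real.sin (θ i - θ j)) := by ring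
        _ ≤ G i j * |Real.sin (θ i - θ j)| :=
          mul_le_mul_of_nonneg_left (neg_le_abs _) (hGge i j hij)
    linarith
end

section
/- Existence and uniqueness of an interior equilibrium (Proposition 7). If k_i > 0 and V_i^* > 0 for all i, then: (a) Ψ^ℓ is Metzler (all off-diagonal entries nonnegative); (b) Ψ^ℓ is invertible and −(Ψ^ℓ)⁻¹ has all entries nonnegative; (c) the vector V̄ := −(Ψ^ℓ)⁻¹ b has all components strictly positive, i.e., V̄ ∈ int(ℝⁿ₊); and (d) V̄ is the unique vector V ∈ int(ℝⁿ₊) satisfying Ψ^ℓ V + b = 0, hence the unique equilibrium of the system V̇ = diag(V)(Ψ^ℓ V + b) in int(ℝⁿ₊). -/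
open Finset Matrix

/-- At a minimizing index, `(A *ᵥ x) i₀ ≤ (∑ j, A i₀ j) * x i₀` for a matrix
with nonpositive off-diagonal entries. -/
lemma minIndex_mulVec_bound {n : ℕ} (A : Matrix (Fin n) (Fin n) ℝ)
    (hoff : ∀ i j, i ≠ j → A i j ≤ 0) (x : Fin n → ℝ) (i₀ : Fin n)
    (hmin : ∀ j, x i₀ ≤ x j) :
    A.mulVec x i₀ ≤ (∑ j, A i₀ j) * x i₀ := by
  rw [Matrix.mulVec, dotProduct, Finset.sum_mul]
  apply Finset.sum_le_sum
  intro j _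
  rcases eq_or_ne j i₀ with rfl | hj
  · exact le_refl _
  · exact mul_le_mul_of_nonpos_left (hmin j) (hoff i₀ j (Ne.symm hj))

lemma pos_of_mulVec_pos {n : ℕ} (hn : 1 ≤ n) (A : Matrix (Fin n) (Fin n) ℝ)
    (hoff : ∀ i j, i ≠ j → A i j ≤ 0) (hrow : ∀ i, 0 < ∑ j, A i j)
    (x : Fin n → ℝ) (hx : ∀ i, 0 < A.mulVec x i) : ∀ i, 0 < x i := by
  have : Nonempty (Fin n) := ⟨⟨0, hn⟩⟩
  obtain ⟨i₀, -, hmin⟩ := Finset.exists_min_image Finset.univ x ⟨⟨0, hn⟩, Finset.mem_univ _⟩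
  have hb := minIndex_mulVec_bound A hoff x i₀ (fun j => hmin j (Finset.mem_univ j))
  have hpos : 0 < x i₀ := by
    by_contra h
    push_neg at h
    have : (∑ j, A i₀ j) * x i₀ ≤ 0 := mul_nonpos_of_nonneg_of_nonpos (hrow i₀).le h
    linarith [hx i₀]
  intro i
  exact lt_of_lt_of_le hpos (hmin i (Finset.mem_univ i))

lemma nonneg_of_mulVec_nonneg {n : ℕ} (hn : 1 ≤ n) (A : Matrix (Fin n) (Fin n) ℝ)
    (hoff : ∀ i j, i ≠ j → A i j ≤ 0) (hrow : ∀ i, 0 < ∑ j, A i j)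
    (x : Fin n → ℝ) (hx : ∀ i, 0 ≤ A.mulVec x i) : ∀ i, 0 ≤ x i := by
  obtain ⟨i₀, -, hmin⟩ := Finset.exists_min_image Finset.univ x ⟨⟨0, hn⟩, Finset.mem_univ _⟩
  have hb := minIndex_mulVec_bound A hoff x i₀ (fun j => hmin j (Finset.mem_univ j))
  have hpos : 0 ≤ x i₀ := by
    by_contra h
    push_neg at h
    have : (∑ j, A i₀ j) * x i₀ < 0 := mul_neg_of_pos_of_neg (hrow i₀) h
    linarith [hx i₀]
  intro i
  exact le_trans hpos (hmin i (Finset.mem_univ i))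

/-- Existence and uniqueness of an interior equilibrium
(Proposition 7). `Ψℓ` is Metzler and invertible, `−(Ψℓ)⁻¹` is entrywise
nonnegative, `V̄ = −(Ψℓ)⁻¹ b` is strictly positive, and it is the unique
solution of `Ψℓ V + b = 0` in the open positive orthant. -/
theorem decoupled_interior_equilibrium
    (n : ℕ) (hn : 1 ≤ n)
    (B : Fin n → Fin n → ℝ) (Bsh k Vst : Fin n → ℝ)
    (hBsymm : ∀ i j, B i j = B j i)
    (hBle : ∀ i j, i ≠ j → B i j ≤ 0)
    (hBsh : ∀ i, 0 ≤ Bsh i)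
    (hk : ∀ i, 0 < k i)
    (hVst : ∀ i, 0 < Vst i)
    (b : Fin n → ℝ) (hb : ∀ i, b i = k i * Vst i)
    (Ψℓ : Matrix (Fin n) (Fin n) ℝ)
    (hΨdiag : ∀ i,
      Ψℓ i i = -((Bsh i + ∑ j ∈ Finset.univ.erase i, |B i j|) + k i))
    (hΨoff : ∀ i j, i ≠ j → Ψℓ i j = |B i j|) :
    -- (a) Ψℓ is Metzler
    (∀ i j, i ≠ j → 0 ≤ Ψℓ i j) ∧
    -- (b) Ψℓ is invertible and −(Ψℓ)⁻¹ is entrywise nonnegative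
    IsUnit Ψℓ.det ∧
    (∀ i j, 0 ≤ (-(Ψℓ⁻¹)) i j) ∧
    -- (c) V̄ := −(Ψℓ)⁻¹ b is strictly positive
    (∀ i, 0 < (-(Ψℓ⁻¹)).mulVec b i) ∧
    -- (d) V̄ is the unique equilibrium in the open positive orthant
    (Ψℓ.mulVec ((-(Ψℓ⁻¹)).mulVec b) + b = 0) ∧
    (∀ V : Fin n → ℝ, (∀ i, 0 < V i) → Ψℓ.mulVec V + b = 0 →
      V = (-(Ψℓ⁻¹)).mulVec b) := by
  set A : Matrix (Fin n) (Fin n) ℝ := -Ψℓ with hA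
  -- basic entry facts about A
  have hAoff : ∀ i j, i ≠ j → A i j ≤ 0 := by
    intro i j hij
    simp only [hA, Matrix.neg_apply, hΨoff i j hij]
    simpa using abs_nonneg (B i j)
  have hAdiag : ∀ i, A i i = (Bsh i + ∑ j ∈ Finset.univ.erase i, |B i j|) + k i := by
    intro i; simp [hA, hΨdiag i]
  have hArow : ∀ i, 0 < ∑ j, A i j := by
    intro i
    have hsplit : ∑ j, A i j = A i i + ∑ j ∈ Finset.univ.erase i, A i j :=
      (Finset.add_sum_erase Finset.univ (fun j => A i j) (Finset.mem_univ i)).symm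
    have hoffsum : ∑ j ∈ Finset.univ.erase i, A i j
        = -∑ j ∈ Finset.univ.erase i, |B i j| := by
      rw [← Finset.sum_neg_distrib]
      apply Finset.sum_congr rfl
      intro j hj
      have hji : i ≠ j := fun h => (Finset.mem_erase.mp hj).1 h.symm
      simp [hA, hΨoff i j hji]
    rw [hsplit, hAdiag i, hoffsum]
    have := hBsh i; have := hk i
    linarith
  -- strict diagonal dominance ⇒ det A ≠ 0
  have hdetA : A.det ≠ 0 := by
    apply det_ne_zero_of_sum_row_lt_diag
    intro i
    have h1 : ∑ j ∈ Finset.univ.erase i, ‖A i j‖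
        = ∑ j ∈ Finset.univ.erase i, |B i j| := by
      apply Finset.sum_congr rfl
      intro j hj
      have hji : i ≠ j := fun h => (Finset.mem_erase.mp hj).1 h.symm
      simp [hA, Real.norm_eq_abs, hΨoff i j hji, abs_abs]
    have h2 : ‖A i i‖ = (Bsh i + ∑ j ∈ Finset.univ.erase i, |B i j|) + k i := by
      rw [Real.norm_eq_abs, hAdiag i]
      apply abs_of_pos
      have : (0:ℝ) ≤ ∑ j ∈ Finset.univ.erase i, |B i j| :=
        Finset.sum_nonneg fun j _ => abs_nonneg _
      have := hBsh i; have := hk i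
      linarith
    rw [h1, h2]
    have := hBsh i; have := hk i
    linarith
  have hdetΨ : Ψℓ.det ≠ 0 := by
    intro h
    apply hdetA
    rw [hA, Matrix.det_neg, h, mul_zero]
  have hUnit : IsUnit Ψℓ.det := isUnit_iff_ne_zero.mpr hdetΨ
  have hUnitA : IsUnit A.det := isUnit_iff_ne_zero.mpr hdetA
  -- A⁻¹ = -(Ψℓ⁻¹)
  have hAinv : A⁻¹ = -(Ψℓ⁻¹) := by
    apply Matrix.inv_eq_right_inv
    rw [hA, Matrix.neg_mul, Matrix.mul_neg, neg_neg, Matrix.mul_nonsing_inv _ hUnit]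
  -- A * A⁻¹ = 1
  have hAmul : A * A⁻¹ = 1 := Matrix.mul_nonsing_inv _ hUnitA
  have hmulA : A⁻¹ * A = 1 := Matrix.nonsing_inv_mul _ hUnitA
  -- (b) nonnegativity of A⁻¹
  have hinvNonneg : ∀ i j, 0 ≤ A⁻¹ i j := by
    intro i j
    have hx : ∀ i', 0 ≤ A.mulVec (A⁻¹.mulVec (Pi.single j 1)) i' := by
      intro i'
      rw [Matrix.mulVec_mulVec, hAmul, Matrix.one_mulVec]
      by_cases h : i' = j
      · subst h; simp
      · simp [Pi.single_eq_of_ne h]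
    have := nonneg_of_mulVec_nonneg hn A hAoff hArow (A⁻¹.mulVec (Pi.single j 1)) hx i
    rwa [Matrix.mulVec_single_one] at this
  -- positivity of b
  have hbpos : ∀ i, 0 < b i := fun i => by rw [hb i]; exact mul_pos (hk i) (hVst i)
  -- (c)
  have hVbar : A.mulVec ((-(Ψℓ⁻¹)).mulVec b) = b := by
    rw [← hAinv, Matrix.mulVec_mulVec, hAmul, Matrix.one_mulVec]
  have hVbarPos : ∀ i, 0 < (-(Ψℓ⁻¹)).mulVec b i := by
    apply pos_of_mulVec_pos hn A hAoff hArow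
    intro i; rw [hVbar]; exact hbpos i
  refine ⟨?_, hUnit, ?_, hVbarPos, ?_, ?_⟩
  · intro i j hij; rw [hΨoff i j hij]; exact abs_nonneg _
  · intro i j; rw [← hAinv]; exact hinvNonneg i j
  · have h1 := hVbar
    rw [hA, Matrix.neg_mulVec] at h1
    have h2 := neg_eq_iff_eq_neg.mp h1
    rw [h2]
    simp
  · intro V hVpos hVeq
    have hΨV : Ψℓ.mulVec V = -b := eq_neg_of_add_eq_zero_left hVeq
    have hAV : A.mulVec V = b := by
      rw [hA, Matrix.neg_mulVec, hΨV, neg_neg]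
    calc V = (1 : Matrix (Fin n) (Fin n) ℝ).mulVec V := (Matrix.one_mulVec V).symm
      _ = (A⁻¹ * A).mulVec V := by rw [hmulA]
      _ = A⁻¹.mulVec (A.mulVec V) := by rw [← Matrix.mulVec_mulVec]
      _ = (-(Ψℓ⁻¹)).mulVec b := by rw [hAV, hAinv]
end

section
/- Asymptotic stability of the interior equilibrium with domain of attraction the positive orthant (Proposition 8). Assume k_i > 0 and V_i^* > 0 for all i, and let V̄ ∈ int(ℝⁿ₊) satisfy Ψ^ℓ V̄ + b = 0. Then every continuously differentiable solution V : [0,∞) → ℝⁿ of V̇_i(t) = V_i(t) ((Ψ^ℓ V(t))_i + b_i) with V(0) ∈ int(ℝⁿ₊) remains in int(ℝⁿ₊) for all t ≥ 0 and satisfies V(t) → V̄ as t → ∞. -/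
/-!
Along a solution, the Volterra function `W = ∑ᵢ (Vᵢ - V̄ᵢ - V̄ᵢ log (Vᵢ / V̄ᵢ))` has derivative
`eᵀ Ψℓ e` with `e = V - V̄`. Since `Ψℓ` is symmetric with nonnegative off-diagonal entries and row
sums `-(Bshᵢ + kᵢ)`, this is at most `-∑ kᵢ eᵢ²`. Hence `W` decreases, so the orbit stays in a
sublevel set of `W`, on which the coordinates are bounded below by some `δ > 0`; there
`W ≤ ∑ eᵢ² / δᵢ`, so `Ẇ ≤ -ρ W` and Grönwall gives `W → 0`. Finally `(√Vᵢ - √V̄ᵢ)² ≤ W` forces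
`V → V̄`. Positivity holds because each `Vᵢ` solves the linear equation `ẏ = y gᵢ(t)`, whose
solutions vanishing at one time vanish identically.
-/

open Finset Matrix Filter Topology

noncomputable def volterraFun (c x : ℝ) : ℝ := x - c - c * Real.log (x / c)

section volterraFun

variable {c x : ℝ}

theorem sq_sqrt_sub_sqrt_le_volterraFun (hc : 0 < c) (hx : 0 < x) :
    (√x - √c) ^ 2 ≤ volterraFun c x := by
  have hr : 0 < √c := Real.sqrt_pos.2 hc
  have hs : 0 < √x := Real.sqrt_pos.2 hx
  have hlog : Real.log (x / c) = 2 * Real.log (√x / √c) := by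
    rw [← Real.log_rpow (by positivity), Real.div_rpow hs.le hr.le]
    norm_num [Real.sq_sqrt hx.le, Real.sq_sqrt hc.le]
  have hlog_le := Real.log_le_sub_one_of_pos (div_pos hs hr)
  rw [volterraFun, hlog]
  calc (√x - √c) ^ 2 = x - c - c * (2 * (√x / √c - 1)) := by
        field_simp
        linear_combination √c * Real.sq_sqrt hx.le + (√c - 2 * √x) * Real.sq_sqrt hc.le
    _ ≤ _ := by gcongr

theorem volterraFun_nonneg (hc : 0 < c) (hx : 0 < x) : 0 ≤ volterraFun c x :=
  (sq_nonneg _).trans (sq_sqrt_sub_sqrt_le_volterraFun hc hx)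

theorem volterraFun_le_sq_div (hc : 0 < c) (hx : 0 < x) :
    volterraFun c x ≤ (x - c) ^ 2 / x := by
  have h := Real.log_le_sub_one_of_pos (div_pos hc hx)
  rw [← inv_div, Real.log_inv, inv_div] at h
  calc volterraFun c x ≤ x - c - c * (1 - c / x) := by
        rw [volterraFun]; gcongr; linarith
    _ = (x - c) ^ 2 / x := by field_simp

theorem mul_volterraFun_le {k ρ : ℝ} (hc : 0 < c) (hx : 0 < x) (hρ : 0 ≤ ρ)
    (hρk : ρ ≤ k * x) : ρ * volterraFun c x ≤ k * (x - c) ^ 2 :=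
  calc ρ * volterraFun c x ≤ k * x * ((x - c) ^ 2 / x) :=
        mul_le_mul hρk (volterraFun_le_sq_div hc hx) (volterraFun_nonneg hc hx) (by linarith)
    _ = k * (x - c) ^ 2 := by field_simp

theorem mul_exp_le_of_volterraFun_le {R : ℝ} (hc : 0 < c) (hx : 0 < x) (h : volterraFun c x ≤ R) :
    c * Real.exp (-(R + c) / c) ≤ x := by
  have hlog : -(R + c) / c ≤ Real.log (x / c) := by
    rw [div_le_iff₀ hc]; rw [volterraFun] at h; nlinarith
  calc c * Real.exp (-(R + c) / c) ≤ c * (x / c) := by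
        gcongr; exact (Real.exp_le_exp.2 hlog).trans_eq (Real.exp_log (div_pos hx hc))
    _ = x := by field_simp

theorem HasDerivAt.volterraFun {f : ℝ → ℝ} {f' t : ℝ} (hf : HasDerivAt f f' t) (hc : c ≠ 0)
    (hft : f t ≠ 0) :
    HasDerivAt (fun s => volterraFun c (f s)) ((1 - c / f t) * f') t := by
  refine ((hf.sub_const c).fun_sub
    (((hf.div_const c).log (div_ne_zero hft hc)).const_mul c)).congr_deriv ?_
  field_simp

theorem tendsto_of_tendsto_volterraFun_zero {l : Filter ℝ} {f : ℝ → ℝ} (hc : 0 < c)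
    (hf : ∀ᶠ t in l, 0 < f t) (h : Tendsto (fun t => volterraFun c (f t)) l (𝓝 0)) :
    Tendsto f l (𝓝 c) := by
  have hsqrt : Tendsto (fun t => √(f t)) l (𝓝 √c) := by
    rw [← tendsto_sub_nhds_zero_iff]
    refine squeeze_zero_norm' ?_ (by simpa using h.sqrt)
    filter_upwards [hf] with t ht
    rw [Real.norm_eq_abs, ← Real.sqrt_sq_eq_abs]
    exact Real.sqrt_le_sqrt (sq_sqrt_sub_sqrt_le_volterraFun hc ht)
  have := hsqrt.pow 2
  rw [Real.sq_sqrt hc.le] at this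
  refine this.congr' ?_
  filter_upwards [hf] with t ht using Real.sq_sqrt ht.le

end volterraFun

theorem ne_zero_of_hasDerivAt_mul_self {f g : ℝ → ℝ} (hg : ContinuousOn g (Set.Ici 0))
    (hf : ∀ t ∈ Set.Ici (0 : ℝ), HasDerivAt f (f t * g t) t) (h0 : f 0 ≠ 0) :
    ∀ t ∈ Set.Ici (0 : ℝ), f t ≠ 0 := by
  intro t ht hft
  obtain ⟨K, hK⟩ := isCompact_Icc.exists_bound_of_continuousOn
    (hg.mono (Set.Icc_subset_Ici_self : Set.Icc 0 t ⊆ _))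
  have hrev : ∀ s ∈ Set.Icc 0 t, t - s ∈ Set.Icc 0 t := fun s hs =>
    ⟨by linarith [hs.2], by linarith [hs.1]⟩
  have hderiv : ∀ s ∈ Set.Icc 0 t,
      HasDerivAt (fun s => f (t - s)) (-(f (t - s) * g (t - s))) s := fun s hs =>
    ((hf (t - s) (hrev s hs).1).comp s ((hasDerivAt_id s).const_sub t)).congr_deriv
      (mul_neg_one _)
  -- Run backwards from the zero at `t`: Grönwall uniqueness forces `f ≡ 0` on `[0, t]`.
  have := eq_zero_of_abs_deriv_le_mul_abs_self_of_eq_zero_right (K := K)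
    (fun s hs => (hderiv s hs).continuousAt.continuousWithinAt)
    (fun s hs => (hderiv s (Set.Ico_subset_Icc_self hs)).hasDerivWithinAt)
    (by simpa using hft)
    (fun s hs => by
      rw [norm_neg, norm_mul, mul_comm]
      exact mul_le_mul_of_nonneg_right (hK _ (hrev s (Set.Ico_subset_Icc_self hs)))
        (norm_nonneg _))
    t ⟨ht, le_rfl⟩
  exact h0 (by simpa using this)

theorem pos_of_hasDerivAt_mul_self {f g : ℝ → ℝ} (hg : ContinuousOn g (Set.Ici 0))
    (hf : ∀ t ∈ Set.Ici (0 : ℝ), HasDerivAt f (f t * g t) t) (h0 : 0 < f 0) :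
    ∀ t ∈ Set.Ici (0 : ℝ), 0 < f t := by
  intro t ht
  by_contra! hft
  obtain ⟨s, hs, hfs⟩ := intermediate_value_Icc' (Set.mem_Ici.1 ht)
    (fun s hs => (hf s hs.1).continuousAt.continuousWithinAt) ⟨hft, h0.le⟩
  exact ne_zero_of_hasDerivAt_mul_self hg hf h0.ne' s hs.1 hfs

theorem tendsto_zero_of_hasDerivAt_le_neg_mul {f f' : ℝ → ℝ} {ρ : ℝ} (hρ : 0 < ρ)
    (hf : ∀ t ∈ Set.Ici (0 : ℝ), HasDerivAt f (f' t) t)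
    (hf' : ∀ t ∈ Set.Ici (0 : ℝ), f' t ≤ -ρ * f t) (hf0 : ∀ t ∈ Set.Ici (0 : ℝ), 0 ≤ f t) :
    Tendsto f atTop (𝓝 0) := by
  have hbound : ∀ t ∈ Set.Ici (0 : ℝ), f t ≤ f 0 * Real.exp (-ρ * t) := fun t ht => by
    simpa [gronwallBound_ε0] using le_gronwallBound_of_liminf_deriv_right_le (K := -ρ) (ε := 0)
      (fun s hs => (hf s hs.1).continuousAt.continuousWithinAt)
      (fun s hs _ hr => (hf s hs.1).hasDerivWithinAt.liminf_right_slope_le hr)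
      le_rfl (fun s hs => by simpa using hf' s hs.1) t ⟨ht, le_rfl⟩
  have hexp : Tendsto (fun t => f 0 * Real.exp (-ρ * t)) atTop (𝓝 0) := by
    simpa using (Real.tendsto_exp_atBot.comp
      (tendsto_id.const_mul_atTop_of_neg (neg_neg_of_pos hρ))).const_mul (f 0)
  exact tendsto_of_tendsto_of_tendsto_of_le_of_le' tendsto_const_nhds hexp
    (eventually_ge_atTop 0 |>.mono hf0) (eventually_ge_atTop 0 |>.mono hbound)

theorem exists_pos_forall_le_of_pos {ι : Type*} [Finite ι] {c : ι → ℝ} (hc : ∀ i, 0 < c i) :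
    ∃ ρ > 0, ∀ i, ρ ≤ c i := by
  cases isEmpty_or_nonempty ι
  · exact ⟨1, one_pos, isEmptyElim⟩
  · obtain ⟨i₀, hi₀⟩ := Finite.exists_min c
    exact ⟨c i₀, hc i₀, hi₀⟩

theorem Matrix.dotProduct_mulVec_le_sum_mul_sq {ι : Type*} [Fintype ι] {A : Matrix ι ι ℝ}
    (hA : A.IsSymm) (hA₀ : ∀ i j, i ≠ j → 0 ≤ A i j) (x : ι → ℝ) :
    x ⬝ᵥ A *ᵥ x ≤ ∑ i, (∑ j, A i j) * x i ^ 2 := by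
  have hsymm : ∑ i, ∑ j, A i j * x j ^ 2 = ∑ i, ∑ j, A i j * x i ^ 2 := by
    rw [Finset.sum_comm]
    exact Finset.sum_congr rfl fun i _ => Finset.sum_congr rfl fun j _ => by
      rw [← hA.apply i j]
  have hspread : 0 ≤ ∑ i, ∑ j, A i j * (x i - x j) ^ 2 :=
    Finset.sum_nonneg fun i _ => Finset.sum_nonneg fun j _ => by
      rcases eq_or_ne i j with rfl | hij
      · simp
      · exact mul_nonneg (hA₀ i j hij) (sq_nonneg _)
  have hexpand : ∑ i, ∑ j, A i j * (x i - x j) ^ 2 =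
      ∑ i, ∑ j, A i j * x i ^ 2 - 2 * (x ⬝ᵥ A *ᵥ x) + ∑ i, ∑ j, A i j * x j ^ 2 := by
    simp only [dotProduct, mulVec, Finset.mul_sum, ← Finset.sum_sub_distrib,
      ← Finset.sum_add_distrib]
    exact Finset.sum_congr rfl fun i _ => Finset.sum_congr rfl fun j _ => by ring
  simp only [Finset.sum_mul] at *
  linarith

section LotkaVolterra

variable {ι : Type*} [Fintype ι] {A : Matrix ι ι ℝ} {b : ι → ℝ} {V : ℝ → ι → ℝ}

theorem lotkaVolterra_pos
    (hV : ∀ i, ∀ t ∈ Set.Ici (0 : ℝ),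
      HasDerivAt (fun s => V s i) (V t i * ((A *ᵥ V t) i + b i)) t)
    (hV₀ : ∀ i, 0 < V 0 i) : ∀ t ∈ Set.Ici (0 : ℝ), ∀ i, 0 < V t i := by
  have hVcont : ContinuousOn V (Set.Ici 0) :=
    continuousOn_pi.2 fun i t ht => (hV i t ht).continuousAt.continuousWithinAt
  have hrate : ∀ i, ContinuousOn (fun t => (A *ᵥ V t) i + b i) (Set.Ici 0) := fun i =>
    ((continuous_apply i).comp_continuousOn
      ((continuous_const.matrix_mulVec continuous_id).comp_continuousOn hVcont)).add
      continuousOn_const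
  exact fun t ht i => pos_of_hasDerivAt_mul_self (hrate i) (hV i) (hV₀ i) t ht

theorem hasDerivAt_sum_volterraFun_lotkaVolterra {c : ι → ℝ} (hc : ∀ i, 0 < c i)
    (hcA : A *ᵥ c + b = 0)
    (hV : ∀ i, ∀ t ∈ Set.Ici (0 : ℝ),
      HasDerivAt (fun s => V s i) (V t i * ((A *ᵥ V t) i + b i)) t)
    (hpos : ∀ t ∈ Set.Ici (0 : ℝ), ∀ i, 0 < V t i) {t : ℝ} (ht : t ∈ Set.Ici (0 : ℝ)) :
    HasDerivAt (fun s => ∑ i, volterraFun (c i) (V s i))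
      ((V t - c) ⬝ᵥ A *ᵥ (V t - c)) t := by
  have hrate : ∀ i, (A *ᵥ V t) i + b i = (A *ᵥ (V t - c)) i := fun i => by
    have := congrFun hcA i
    simp only [Pi.add_apply, Pi.zero_apply] at this
    rw [mulVec_sub, Pi.sub_apply]
    linarith
  refine (HasDerivAt.fun_sum fun i _ =>
    (hV i t ht).volterraFun (hc i).ne' (hpos t ht i).ne').congr_deriv ?_
  refine Finset.sum_congr rfl fun i _ => ?_
  have hVti := (hpos t ht i).ne'
  rw [hrate, Pi.sub_apply]
  field_simp

theorem tendsto_lotkaVolterra_of_dissipative {c k : ι → ℝ} (hk : ∀ i, 0 < k i)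
    (hA : ∀ x, x ⬝ᵥ A *ᵥ x ≤ -∑ i, k i * x i ^ 2) (hc : ∀ i, 0 < c i)
    (hcA : A *ᵥ c + b = 0)
    (hV : ∀ i, ∀ t ∈ Set.Ici (0 : ℝ),
      HasDerivAt (fun s => V s i) (V t i * ((A *ᵥ V t) i + b i)) t)
    (hpos : ∀ t ∈ Set.Ici (0 : ℝ), ∀ i, 0 < V t i) :
    Tendsto V atTop (𝓝 c) := by
  set W := fun s => ∑ i, volterraFun (c i) (V s i)
  have hW := fun t ht => hasDerivAt_sum_volterraFun_lotkaVolterra hc hcA hV hpos (t := t) ht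
  have hWterm : ∀ t ∈ Set.Ici (0 : ℝ), ∀ i, volterraFun (c i) (V t i) ≤ W t := fun t ht i =>
    Finset.single_le_sum (fun j _ => volterraFun_nonneg (hc j) (hpos t ht j)) (Finset.mem_univ i)
  have hWanti : AntitoneOn W (Set.Ici 0) := by
    refine antitoneOn_of_hasDerivWithinAt_nonpos (convex_Ici 0)
      (fun t ht => (hW t ht).continuousAt.continuousWithinAt)
      (fun t ht => (hW t (interior_subset ht)).hasDerivWithinAt) fun t _ => ?_
    exact (hA _).trans (neg_nonpos.2 (Finset.sum_nonneg fun i _ => by have := hk i; positivity))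
  -- The orbit stays in the sublevel set `{W ≤ W 0}`, which is bounded away from the boundary.
  set δ := fun i => c i * Real.exp (-(W 0 + c i) / c i)
  have hδ : ∀ t ∈ Set.Ici (0 : ℝ), ∀ i, δ i ≤ V t i := fun t ht i =>
    mul_exp_le_of_volterraFun_le (hc i) (hpos t ht i)
      ((hWterm t ht i).trans (hWanti Set.self_mem_Ici ht ht))
  obtain ⟨ρ, hρ, hρk⟩ := exists_pos_forall_le_of_pos fun i =>
    mul_pos (hk i) (mul_pos (hc i) (Real.exp_pos _) : 0 < δ i)
  have hdecay : ∀ t ∈ Set.Ici (0 : ℝ), (V t - c) ⬝ᵥ A *ᵥ (V t - c) ≤ -ρ * W t := by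
    intro t ht
    have : ρ * W t ≤ ∑ i, k i * (V t - c) i ^ 2 := by
      rw [Finset.mul_sum]
      exact Finset.sum_le_sum fun i _ => mul_volterraFun_le (hc i) (hpos t ht i) hρ.le
        ((hρk i).trans (by gcongr; exacts [(hk i).le, hδ t ht i]))
    linarith [hA (V t - c)]
  have hW₀ := tendsto_zero_of_hasDerivAt_le_neg_mul hρ hW hdecay fun t ht =>
    Finset.sum_nonneg fun i _ => volterraFun_nonneg (hc i) (hpos t ht i)
  refine tendsto_pi_nhds.2 fun i => tendsto_of_tendsto_volterraFun_zero (hc i)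
    ((eventually_ge_atTop 0).mono fun t ht => hpos t ht i) ?_
  exact squeeze_zero'
    ((eventually_ge_atTop 0).mono fun t ht => volterraFun_nonneg (hc i) (hpos t ht i))
    ((eventually_ge_atTop 0).mono fun t ht => hWterm t ht i) hW₀

end LotkaVolterra

theorem decoupled_equilibrium_asymptotically_stable_general
    (n : ℕ)
    (B : Fin n → Fin n → ℝ) (Bsh k : Fin n → ℝ)
    (hBsymm : ∀ i j, B i j = B j i)
    (hBsh : ∀ i, 0 ≤ Bsh i)
    (hk : ∀ i, 0 < k i)
    (b : Fin n → ℝ)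
    (Ψℓ : Matrix (Fin n) (Fin n) ℝ)
    (hΨdiag : ∀ i,
      Ψℓ i i = -((Bsh i + ∑ j ∈ Finset.univ.erase i, |B i j|) + k i))
    (hΨoff : ∀ i j, i ≠ j → Ψℓ i j = |B i j|)
    (Vbar : Fin n → ℝ)
    (hVbar_pos : ∀ i, 0 < Vbar i)
    (hVbar_eq : Ψℓ.mulVec Vbar + b = 0)
    (V : ℝ → Fin n → ℝ)
    (hODE : ∀ i, ∀ t ∈ Set.Ici (0 : ℝ),
      HasDerivAt (fun s => V s i) (V t i * (Ψℓ.mulVec (V t) i + b i)) t)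
    (hV0 : ∀ i, 0 < V 0 i) :
    (∀ t ∈ Set.Ici (0 : ℝ), ∀ i, 0 < V t i) ∧
    Tendsto V atTop (nhds Vbar) := by
  have hΨsymm : Ψℓ.IsSymm := Matrix.IsSymm.ext fun i j => by
    rcases eq_or_ne i j with rfl | hij
    · rfl
    · rw [hΨoff i j hij, hΨoff j i hij.symm, hBsymm]
  have hΨrow : ∀ i, ∑ j, Ψℓ i j = -(Bsh i + k i) := fun i => by
    rw [← Finset.add_sum_erase _ _ (Finset.mem_univ i), hΨdiag,
      Finset.sum_congr rfl fun j hj => hΨoff i j (Finset.ne_of_mem_erase hj).symm]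
    ring
  have hΨ : ∀ x, x ⬝ᵥ Ψℓ *ᵥ x ≤ -∑ i, k i * x i ^ 2 := fun x => by
    refine (dotProduct_mulVec_le_sum_mul_sq hΨsymm (fun i j hij => ?_) x).trans ?_
    · rw [hΨoff i j hij]; exact abs_nonneg _
    · rw [← Finset.sum_neg_distrib]
      gcongr with i
      rw [hΨrow]
      nlinarith [hBsh i, sq_nonneg (x i)]
  have hpos := lotkaVolterra_pos hODE hV0
  exact ⟨hpos, tendsto_lotkaVolterra_of_dissipative hk hΨ hVbar_pos hVbar_eq hODE hpos⟩

/-- Asymptotic stability of the interior equilibrium with domain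
of attraction the open positive orthant (Proposition 8). Every solution of
`V̇ᵢ = Vᵢ ((Ψℓ V)ᵢ + bᵢ)` starting in the open positive orthant stays there and
converges to the interior equilibrium `V̄`. -/
theorem decoupled_equilibrium_asymptotically_stable
    (n : ℕ) (hn : 1 ≤ n)
    (B : Fin n → Fin n → ℝ) (Bsh k Vst : Fin n → ℝ)
    (hBsymm : ∀ i j, B i j = B j i)
    (hBle : ∀ i j, i ≠ j → B i j ≤ 0)
    (hBsh : ∀ i, 0 ≤ Bsh i)
    (hk : ∀ i, 0 < k i)
    (hVst : ∀ i, 0 < Vst i)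
    (b : Fin n → ℝ) (hb : ∀ i, b i = k i * Vst i)
    (Ψℓ : Matrix (Fin n) (Fin n) ℝ)
    (hΨdiag : ∀ i,
      Ψℓ i i = -((Bsh i + ∑ j ∈ Finset.univ.erase i, |B i j|) + k i))
    (hΨoff : ∀ i j, i ≠ j → Ψℓ i j = |B i j|)
    (Vbar : Fin n → ℝ)
    (hVbar_pos : ∀ i, 0 < Vbar i)
    (hVbar_eq : Ψℓ.mulVec Vbar + b = 0)
    (V : ℝ → Fin n → ℝ)
    (hC1 : ∀ i, ContDiffOn ℝ 1 (fun t => V t i) (Set.Ici 0))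
    (hODE : ∀ i, ∀ t ∈ Set.Ici (0 : ℝ),
      HasDerivAt (fun s => V s i) (V t i * (Ψℓ.mulVec (V t) i + b i)) t)
    (hV0 : ∀ i, 0 < V 0 i) :
    (∀ t ∈ Set.Ici (0 : ℝ), ∀ i, 0 < V t i) ∧
    Tendsto V atTop (nhds Vbar) :=
  decoupled_equilibrium_asymptotically_stable_general n B Bsh k hBsymm hBsh hk b Ψℓ hΨdiag hΨoff
    Vbar hVbar_pos hVbar_eq V hODE hV0
end

section
/- Derivative of the Lyapunov function along the decoupled dynamics (key identity in the proof of Proposition 8). Assume k_i > 0 for all i and let V̄ ∈ int(ℝⁿ₊) satisfy Ψ^ℓ V̄ + b = 0. If V : [0,∞) → ℝⁿ is continuously differentiable, takes values in int(ℝⁿ₊), and satisfies V̇_i(t) = V_i(t) ((Ψ^ℓ V(t))_i + b_i) for all i and t ≥ 0, then for all t ≥ 0: d/dt 𝒱(V(t)) = (V(t) − V̄)ᵀ Ψ^ℓ (V(t) − V̄) ≤ 0, with equality only when V(t) = V̄. -/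
/-!
Writing `x = V - V̄` and using `Ψℓ V̄ + b = 0`, the dynamics read `V̇ᵢ = Vᵢ (Ψℓ x)ᵢ`, so the
logarithmic Lyapunov function has derivative `Σᵢ (1 - V̄ᵢ / Vᵢ) Vᵢ (Ψℓ x)ᵢ = xᵀ Ψℓ x`.
`Ψℓ` is symmetric with nonnegative off-diagonal entries, and for such a matrix
`xᵀ A x = Σᵢ (Σⱼ Aᵢⱼ) xᵢ² - ½ Σᵢⱼ Aᵢⱼ (xᵢ - xⱼ)²`; the row sums of `Ψℓ` are `-(Bᵢˢʰ + kᵢ)`,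
hence `xᵀ Ψℓ x ≤ -Σᵢ kᵢ xᵢ²`, which is negative unless `x = 0`.
-/

open Finset Matrix

/-- The Lotka–Volterra Lyapunov function
`𝒱(V) = Σᵢ [(Vᵢ − V̄ᵢ) − V̄ᵢ (ln Vᵢ − ln V̄ᵢ)]`. -/
noncomputable def lvLyap {n : ℕ} (Vbar V : Fin n → ℝ) : ℝ :=
  ∑ i, ((V i - Vbar i) - Vbar i * (Real.log (V i) - Real.log (Vbar i)))

theorem Matrix.dotProduct_mulVec_le_sum_rowSum_mul_sq {ι : Type*} [Fintype ι]
    (A : Matrix ι ι ℝ) (hsymm : ∀ i j, A i j = A j i) (hoff : ∀ i j, i ≠ j → 0 ≤ A i j)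
    (x : ι → ℝ) :
    x ⬝ᵥ A *ᵥ x ≤ ∑ i, (∑ j, A i j) * x i ^ 2 := by
  have hterm : ∀ i j, 0 ≤ A i j * (x i - x j) ^ 2 := fun i j => by
    rcases eq_or_ne i j with rfl | hij
    · simp
    · exact mul_nonneg (hoff i j hij) (sq_nonneg _)
  have hswap : ∑ i, ∑ j, A i j * x j ^ 2 = ∑ i, ∑ j, A i j * x i ^ 2 := by
    rw [Finset.sum_comm]
    simp_rw [hsymm]
  have hexpand : ∑ i, ∑ j, A i j * (x i - x j) ^ 2
      = 2 * ∑ i, (∑ j, A i j) * x i ^ 2 - 2 * x ⬝ᵥ A *ᵥ x := by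
    have hsplit : ∀ i j, A i j * (x i - x j) ^ 2
        = A i j * x i ^ 2 + A i j * x j ^ 2 - 2 * (x i * (A i j * x j)) := fun i j => by ring
    simp only [hsplit, Finset.sum_sub_distrib, Finset.sum_add_distrib, hswap, dotProduct, mulVec,
      ← Finset.mul_sum, ← Finset.sum_mul]
    ring
  have hnonneg := Finset.sum_nonneg fun i (_ : i ∈ univ) =>
    Finset.sum_nonneg fun j (_ : j ∈ univ) => hterm i j
  linarith

theorem hasDerivAt_lvLyap_comp {n : ℕ} (Vbar : Fin n → ℝ) {V : ℝ → Fin n → ℝ}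
    {r : Fin n → ℝ} {t : ℝ} (hV : ∀ i, V t i ≠ 0)
    (hderiv : ∀ i, HasDerivAt (fun s => V s i) (V t i * r i) t) :
    HasDerivAt (fun s => lvLyap Vbar (V s)) ((V t - Vbar) ⬝ᵥ r) t := by
  refine HasDerivAt.fun_sum fun i _ => ?_
  have hlog := ((hderiv i).log (hV i)).sub_const (Real.log (Vbar i))
  refine (((hderiv i).sub_const (Vbar i)).fun_sub (hlog.const_mul (Vbar i))).congr_deriv ?_
  field_simp [hV i]
  simp only [Pi.sub_apply]

theorem dotProduct_mulVec_le_neg_sum_mul_sq_s12 {n : ℕ} {B : Fin n → Fin n → ℝ} {Bsh k : Fin n → ℝ}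
    (hBsymm : ∀ i j, B i j = B j i) (hBsh : ∀ i, 0 ≤ Bsh i) {Ψℓ : Matrix (Fin n) (Fin n) ℝ}
    (hΨdiag : ∀ i, Ψℓ i i = -((Bsh i + ∑ j ∈ univ.erase i, |B i j|) + k i))
    (hΨoff : ∀ i j, i ≠ j → Ψℓ i j = |B i j|) (x : Fin n → ℝ) :
    x ⬝ᵥ Ψℓ *ᵥ x ≤ -∑ i, k i * x i ^ 2 := by
  have hsymm : ∀ i j, Ψℓ i j = Ψℓ j i := fun i j => by
    rcases eq_or_ne i j with rfl | hij
    · rfl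
    · rw [hΨoff i j hij, hΨoff j i hij.symm, hBsymm]
  have hoff : ∀ i j, i ≠ j → 0 ≤ Ψℓ i j := fun i j hij => hΨoff i j hij ▸ abs_nonneg _
  have hrow : ∀ i, ∑ j, Ψℓ i j = -(Bsh i + k i) := fun i => by
    rw [← Finset.add_sum_erase univ _ (mem_univ i), hΨdiag i,
      Finset.sum_congr rfl fun j hj => hΨoff i j (Finset.ne_of_mem_erase hj).symm]
    ring
  calc x ⬝ᵥ Ψℓ *ᵥ x ≤ ∑ i, (∑ j, Ψℓ i j) * x i ^ 2 :=
        Ψℓ.dotProduct_mulVec_le_sum_rowSum_mul_sq hsymm hoff x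
    _ = -∑ i, Bsh i * x i ^ 2 - ∑ i, k i * x i ^ 2 := by
        simp only [hrow, neg_add, add_mul, neg_mul, Finset.sum_add_distrib, Finset.sum_neg_distrib]
        ring
    _ ≤ -∑ i, k i * x i ^ 2 := by
        have hshunt := Finset.sum_nonneg fun i (_ : i ∈ univ) =>
          mul_nonneg (hBsh i) (sq_nonneg (x i))
        linarith

theorem lvLyap_derivative_along_decoupled_dynamics_general
    (n : ℕ)
    (B : Fin n → Fin n → ℝ) (Bsh k : Fin n → ℝ)
    (hBsymm : ∀ i j, B i j = B j i)
    (hBsh : ∀ i, 0 ≤ Bsh i)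
    (hk : ∀ i, 0 < k i)
    (b : Fin n → ℝ)
    (Ψℓ : Matrix (Fin n) (Fin n) ℝ)
    (hΨdiag : ∀ i,
      Ψℓ i i = -((Bsh i + ∑ j ∈ Finset.univ.erase i, |B i j|) + k i))
    (hΨoff : ∀ i j, i ≠ j → Ψℓ i j = |B i j|)
    (Vbar : Fin n → ℝ)
    (hVbar_eq : Ψℓ.mulVec Vbar + b = 0)
    (V : ℝ → Fin n → ℝ)
    (hpos : ∀ t i, 0 < V t i)
    (hODE : ∀ i, ∀ t ∈ Set.Ici (0 : ℝ),
      HasDerivAt (fun s => V s i) (V t i * (Ψℓ.mulVec (V t) i + b i)) t) :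
    ∀ t ∈ Set.Ici (0 : ℝ),
      HasDerivAt (fun s => lvLyap Vbar (V s))
        ((V t - Vbar) ⬝ᵥ Ψℓ.mulVec (V t - Vbar)) t ∧
      (V t - Vbar) ⬝ᵥ Ψℓ.mulVec (V t - Vbar) ≤ 0 ∧
      ((V t - Vbar) ⬝ᵥ Ψℓ.mulVec (V t - Vbar) = 0 → V t = Vbar) := by
  intro t ht
  have hrate : ∀ i, (Ψℓ *ᵥ V t) i + b i = (Ψℓ *ᵥ (V t - Vbar)) i := fun i => by
    have := congrFun hVbar_eq i
    rw [mulVec_sub, Pi.sub_apply]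
    rw [Pi.add_apply, Pi.zero_apply] at this
    linarith
  set x := V t - Vbar
  have hquad := dotProduct_mulVec_le_neg_sum_mul_sq_s12 hBsymm hBsh hΨdiag hΨoff x
  have hkx : ∀ i ∈ univ, 0 ≤ k i * x i ^ 2 := fun i _ => mul_nonneg (hk i).le (sq_nonneg _)
  refine ⟨hasDerivAt_lvLyap_comp Vbar (fun i => (hpos t i).ne') fun i => hrate i ▸ hODE i t ht,
    hquad.trans (neg_nonpos.2 (Finset.sum_nonneg hkx)), fun hzero => ?_⟩
  have hsum : ∑ i, k i * x i ^ 2 = 0 := le_antisymm (by linarith) (Finset.sum_nonneg hkx)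
  funext i
  have hxi : x i ^ 2 = 0 :=
    (mul_eq_zero.1 ((Finset.sum_eq_zero_iff_of_nonneg hkx).1 hsum i (mem_univ i))).resolve_left
      (hk i).ne'
  exact sub_eq_zero.1 (pow_eq_zero_iff two_ne_zero |>.1 hxi)

/-- Derivative of the Lyapunov function along the decoupled
dynamics (key identity in the proof of Proposition 8). Along interior solutions
of `V̇ᵢ = Vᵢ ((Ψℓ V)ᵢ + bᵢ)`, one has
`d/dt 𝒱(V(t)) = (V(t) − V̄)ᵀ Ψℓ (V(t) − V̄) ≤ 0`, with equality only at `V̄`. -/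
theorem lvLyap_derivative_along_decoupled_dynamics
    (n : ℕ) (hn : 1 ≤ n)
    (B : Fin n → Fin n → ℝ) (Bsh k Vst : Fin n → ℝ)
    (hBsymm : ∀ i j, B i j = B j i)
    (hBle : ∀ i j, i ≠ j → B i j ≤ 0)
    (hBsh : ∀ i, 0 ≤ Bsh i)
    (hk : ∀ i, 0 < k i)
    (hVst : ∀ i, 0 < Vst i)
    (b : Fin n → ℝ) (hb : ∀ i, b i = k i * Vst i)
    (Ψℓ : Matrix (Fin n) (Fin n) ℝ)
    (hΨdiag : ∀ i,
      Ψℓ i i = -((Bsh i + ∑ j ∈ Finset.univ.erase i, |B i j|) + k i))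
    (hΨoff : ∀ i j, i ≠ j → Ψℓ i j = |B i j|)
    (Vbar : Fin n → ℝ)
    (hVbar_pos : ∀ i, 0 < Vbar i)
    (hVbar_eq : Ψℓ.mulVec Vbar + b = 0)
    (V : ℝ → Fin n → ℝ)
    (hC1 : ∀ i, ContDiffOn ℝ 1 (fun t => V t i) (Set.Ici 0))
    (hpos : ∀ t i, 0 < V t i)
    (hODE : ∀ i, ∀ t ∈ Set.Ici (0 : ℝ),
      HasDerivAt (fun s => V s i) (V t i * (Ψℓ.mulVec (V t) i + b i)) t) :
    ∀ t ∈ Set.Ici (0 : ℝ),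
      HasDerivAt (fun s => lvLyap Vbar (V s))
        ((V t - Vbar) ⬝ᵥ Ψℓ.mulVec (V t - Vbar)) t ∧
      (V t - Vbar) ⬝ᵥ Ψℓ.mulVec (V t - Vbar) ≤ 0 ∧
      ((V t - Vbar) ⬝ᵥ Ψℓ.mulVec (V t - Vbar) = 0 → V t = Vbar) :=
  lvLyap_derivative_along_decoupled_dynamics_general n B Bsh k hBsymm hBsh hk b Ψℓ hΨdiag hΨoff Vbar
    hVbar_eq V hpos hODE
end
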